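/- arXiv:2404.17289 — 7 statements merged into one kernel-verified Lean document; each statement's English description precedes it below -/
import Mathlib

section
/- A sequence x = (x_k) ∈ c lies in the range of I − T (where T is the Cesàro operator on c) if and only if x_0 = 0, lim_{k→∞} x_k = 0, and the series ∑_{k=1}^∞ x_k/k converges. -/
open Filter Topology

noncomputable section

/-- The Cesàro averaging map on sequences. -/
def cesaro (x : ℕ → ℂ) : ℕ → ℂ :=
  fun k => ((k : ℂ) + 1)⁻¹ * ∑ j ∈ Finset.range (k + 1), x j

/-- The Cesàro average of a convergent complex sequence converges to the same limit. -/
lemma tendsto_cesaro {y : ℕ → ℂ} {l : ℂ} (h : Tendsto y atTop (nhds l)) :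
    Tendsto (cesaro y) atTop (nhds l) := by
  have h1 : Tendsto (fun n : ℕ => (n⁻¹ : ℝ) • ∑ i ∈ Finset.range n, y i) atTop (nhds l) :=
    h.cesaro_smul
  have h2 := h1.comp (tendsto_add_atTop_nat 1)
  apply h2.congr
  intro k
  simp only [Function.comp_apply, cesaro]
  rw [Complex.real_smul]
  push_cast
  ring

lemma cast_succ_ne_zero (n : ℕ) : ((n : ℂ) + 1) ≠ 0 := by
  have : ((n + 1 : ℕ) : ℂ) ≠ 0 := Nat.cast_ne_zero.2 (Nat.succ_ne_zero n)
  push_cast at this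
  exact this

/-- A convergent sequence `x` lies in the range of `I - T` (with `T` the
Cesàro operator on `c`) iff `x₀ = 0`, `lim_k x_k = 0` and `∑_{k≥1} x_k / k`
converges. -/
theorem mem_range_one_sub_cesaro (x : ℕ → ℂ) (hx : ∃ l : ℂ, Tendsto x atTop (nhds l)) :
    (∃ y : ℕ → ℂ, (∃ l : ℂ, Tendsto y atTop (nhds l)) ∧ y - cesaro y = x) ↔
      (x 0 = 0 ∧ Tendsto x atTop (nhds 0) ∧
        ∃ S : ℂ, Tendsto (fun n => ∑ k ∈ Finset.Icc 1 n, x k / (k : ℂ)) atTop (nhds S)) := by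
  constructor
  · rintro ⟨y, ⟨l, hl⟩, hxy⟩
    have hc := tendsto_cesaro hl
    have hxn : ∀ n, x n = y n - cesaro y n := fun n => by
      rw [← hxy]; rfl
    refine ⟨?_, ?_, ?_⟩
    · rw [hxn 0]
      simp [cesaro]
    · have := hl.sub hc
      simp only [sub_self] at this
      exact this.congr (fun n => (hxn n).symm)
    -- telescoping: ∑_{k=1}^n x k / k = cesaro y n - cesaro y 0
    · have key : ∀ n : ℕ, x (n + 1) / ((n + 1 : ℕ) : ℂ) = cesaro y (n + 1) - cesaro y n := by
        intro n
        rw [hxn (n + 1)]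
        simp only [cesaro]
        rw [Finset.sum_range_succ (f := y) (n := n + 1)]
        set a := ∑ j ∈ Finset.range (n + 1), y j
        set b := y (n + 1)
        push_cast
        have h1 : ((n : ℂ) + 1) ≠ 0 := cast_succ_ne_zero n
        have h2 : ((n : ℂ) + 1 + 1) ≠ 0 := by
          have h := cast_succ_ne_zero (n + 1); push_cast at h; exact h
        field_simp
        ring
      have hP : ∀ n : ℕ, ∑ k ∈ Finset.Icc 1 n, x k / (k : ℂ) = cesaro y n - cesaro y 0 := by
        intro n
        induction n with
        | zero => simp
        | succ m ih =>
          rw [Finset.sum_Icc_succ_top (by omega : 1 ≤ m + 1), ih, key m]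
          push_cast
          ring
      refine ⟨l - cesaro y 0, ?_⟩
      have := hc.sub_const (cesaro y 0)
      exact this.congr (fun n => (hP n).symm)
  · rintro ⟨h0, hx0, S, hS⟩
    set t : ℕ → ℂ := fun n => ∑ k ∈ Finset.Icc 1 n, x k / (k : ℂ) with ht
    set y : ℕ → ℂ := fun n => x n + t n with hy
    have hsum : ∀ n : ℕ, ∑ j ∈ Finset.range (n + 1), y j = ((n : ℂ) + 1) * t n := by
      intro n
      induction n with
      | zero => simp [hy, ht, h0]
      | succ m ih =>
        rw [Finset.sum_range_succ, ih]
        have htstep : t (m + 1) = t m + x (m + 1) / ((m + 1 : ℕ) : ℂ) := by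
          simp only [ht]
          rw [Finset.sum_Icc_succ_top (by omega : 1 ≤ m + 1)]
        have h1 : ((m : ℂ) + 1) ≠ 0 := cast_succ_ne_zero m
        have hym : y (m + 1) = x (m + 1) + t (m + 1) := rfl
        rw [hym, htstep]
        push_cast
        field_simp
        ring
    have hces : ∀ n, cesaro y n = t n := by
      intro n
      simp only [cesaro]
      rw [hsum n, inv_mul_cancel_left₀ (cast_succ_ne_zero n)]
    refine ⟨y, ⟨S, ?_⟩, ?_⟩
    · have : Tendsto (fun n => x n + t n) atTop (nhds (0 + S)) := hx0.add hS
      simpa using this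
    · funext n
      simp only [Pi.sub_apply, hces n]
      simp only [hy]
      ring
end
end

section
/- If x ∈ c satisfies x_0 = 0, lim_{k→∞} x_k = 0, and ∑_{k=1}^∞ x_k/k converges, then the sequence y defined by y_0 arbitrary and y_k = y_0 + (1 + 1/k)x_k + ∑_{j=1}^{k-1} x_j/j for k ≥ 1 belongs to c and satisfies y − Ty = x. -/
open Filter Topology

noncomputable section

/-- If `x ∈ c` has `x₀ = 0`, `lim x_k = 0` and `∑ x_k/k` convergent, then the
sequence `y` with `y₀` arbitrary and
`y_k = y₀ + (1 + 1/k) x_k + ∑_{j=1}^{k-1} x_j / j` for `k ≥ 1` lies in `c`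
and satisfies `y - T y = x`. -/
theorem solve_one_sub_cesaro (x : ℕ → ℂ)
    (h0 : x 0 = 0) (hlim : Tendsto x atTop (nhds 0))
    (hser : ∃ S : ℂ, Tendsto (fun n => ∑ k ∈ Finset.Icc 1 n, x k / (k : ℂ)) atTop (nhds S))
    (y : ℕ → ℂ)
    (hy : ∀ k : ℕ, 1 ≤ k →
      y k = y 0 + (1 + (k : ℂ)⁻¹) * x k + ∑ j ∈ Finset.Icc 1 (k - 1), x j / (j : ℂ)) :
    (∃ l : ℂ, Tendsto y atTop (nhds l)) ∧ y - cesaro y = x := by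
  obtain ⟨S, hS⟩ := hser
  have key : ∀ k : ℕ, 1 ≤ k → ∑ j ∈ Finset.range (k+1), y j
      = ((k:ℂ)+1) * (y 0 + ∑ j ∈ Finset.Icc 1 (k-1), x j / (j:ℂ) + x k / (k:ℂ)) := by
    intro k hk
    induction k, hk using Nat.le_induction with
    | base =>
      simp [Finset.sum_range_succ, hy 1 le_rfl, h0]
      ring
    | succ n hn ih =>
      have hn0 : (n:ℂ) ≠ 0 := Nat.cast_ne_zero.mpr (by omega)
      have hn1 : (n:ℂ) + 1 ≠ 0 := by
        have := Nat.cast_ne_zero (R := ℂ) (n := n+1) |>.mpr (by omega)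
        push_cast at this; exact this
      have hs : ∑ j ∈ Finset.Icc 1 ((n+1)-1), x j / (j:ℂ)
          = ∑ j ∈ Finset.Icc 1 (n-1), x j / (j:ℂ) + x n / (n:ℂ) := by
        have h1 : (n+1) - 1 = (n-1) + 1 := by omega
        have h2 : (n-1) + 1 = n := by omega
        rw [h1, Finset.sum_Icc_succ_top (by omega), h2]
      rw [Finset.sum_range_succ, ih, hy (n+1) (by omega), hs]
      push_cast
      field_simp
      ring
  constructor
  · refine ⟨y 0 + (1 + 0) * 0 + S, ?_⟩
    have hinv : Tendsto (fun k : ℕ => ((k:ℂ))⁻¹) atTop (nhds 0) := by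
      have h1 : Tendsto (fun k : ℕ => ((k:ℝ))⁻¹) atTop (nhds 0) :=
        tendsto_inv_atTop_zero.comp tendsto_natCast_atTop_atTop
      have := (Complex.continuous_ofReal.tendsto 0).comp h1
      simpa [Function.comp_def] using this
    have h2 : Tendsto (fun k : ℕ => ∑ j ∈ Finset.Icc 1 (k-1), x j / (j:ℂ)) atTop (nhds S) :=
      hS.comp (tendsto_sub_atTop_nat 1)
    have h3 : Tendsto (fun k : ℕ => y 0 + (1 + (k:ℂ)⁻¹) * x k
        + ∑ j ∈ Finset.Icc 1 (k-1), x j / (j:ℂ)) atTop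
        (nhds (y 0 + (1 + 0) * 0 + S)) :=
      ((tendsto_const_nhds.add ((tendsto_const_nhds.add hinv).mul hlim)).add h2)
    refine h3.congr' ?_
    filter_upwards [eventually_ge_atTop 1] with k hk
    exact (hy k hk).symm
  · funext k
    simp only [Pi.sub_apply]
    rcases Nat.eq_zero_or_pos k with rfl | hk
    · simp [cesaro, h0]
    · have hk0 : (k:ℂ) ≠ 0 := Nat.cast_ne_zero.mpr (by omega)
      have hk1 : (k:ℂ) + 1 ≠ 0 := by
        have := Nat.cast_ne_zero (R := ℂ) (n := k+1) |>.mpr (by omega)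
        push_cast at this; exact this
      unfold cesaro
      rw [key k hk, hy k hk]
      field_simp
      ring
end
end

section
/- Let (a_k)_{k≥0} be complex numbers with a_k = O(1/k) as k → ∞, and define f(t) = e^{−t} ∑_{k=0}^∞ a_k t^k/k! for t ≥ 0. If f ∈ L¹(0,∞), then the series ∑_{k=0}^∞ a_k converges and ∑_{k=0}^∞ a_k = ∫_0^∞ f(t) dt. -/
open Filter Topology MeasureTheory Asymptotics
open scoped Nat

noncomputable section

lemma M0 (x : ℝ) : ∑' k : ℕ, x ^ k / k ! = Real.exp x := by
  rw [Real.exp_eq_exp_ℝ, NormedSpace.exp_eq_tsum_div]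

lemma Sum1 (x : ℝ) (hx : 0 ≤ x) : Summable (fun k : ℕ => (k : ℝ) * x ^ k / k !) := by
  refine Summable.of_nonneg_of_le (fun k => by positivity) (fun k => ?_)
    (Real.summable_pow_div_factorial (2 * x))
  have h : (k : ℝ) ≤ 2 ^ k := by exact_mod_cast (Nat.lt_two_pow_self (n := k)).le
  rw [mul_pow]
  gcongr

lemma Sum2 (x : ℝ) (hx : 0 ≤ x) : Summable (fun k : ℕ => (k : ℝ)^2 * x ^ k / k !) := by
  refine Summable.of_nonneg_of_le (fun k => by positivity) (fun k => ?_)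
    (Real.summable_pow_div_factorial (4 * x))
  have h : (k : ℝ) ≤ 2 ^ k := by exact_mod_cast (Nat.lt_two_pow_self (n := k)).le
  have h2 : (k : ℝ)^2 ≤ 4 ^ k := by
    have := mul_le_mul h h (Nat.cast_nonneg k) (by positivity)
    calc (k:ℝ)^2 = k * k := sq (k:ℝ) ▸ sq ((k:ℝ)) ▸ by ring
    _ ≤ 2^k * 2^k := this
    _ = 4^k := by rw [← mul_pow]; norm_num
  rw [mul_pow]
  gcongr

lemma M1 (x : ℝ) (hx : 0 ≤ x) : ∑' k : ℕ, (k : ℝ) * x ^ k / k ! = x * Real.exp x := by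
  rw [Summable.tsum_eq_zero_add (Sum1 x hx)]
  have : ∀ k : ℕ, ((k:ℕ)+1 : ℝ) * x ^ (k+1) / (k+1)! = x * (x ^ k / k !) := by
    intro k
    rw [Nat.factorial_succ]
    push_cast
    field_simp
    ring
  simp only [Nat.cast_zero, zero_mul, zero_div, zero_add]
  rw [tsum_congr (fun k => by push_cast; exact this k), tsum_mul_left, M0]

lemma nonneg_kk1 (k : ℕ) : 0 ≤ (k : ℝ) * ((k : ℝ) - 1) := by
  rcases Nat.eq_zero_or_pos k with h | h
  · simp [h]
  · have : (1 : ℝ) ≤ k := by exact_mod_cast h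
    have := Nat.cast_nonneg (α := ℝ) k
    nlinarith

lemma Sum2' (x : ℝ) (hx : 0 ≤ x) :
    Summable (fun k : ℕ => (k : ℝ) * ((k : ℝ) - 1) * x ^ k / k !) := by
  refine Summable.of_nonneg_of_le (fun k => by
      have := nonneg_kk1 k; positivity)
    (fun k => ?_) (Sum2 x hx)
  have h1 := nonneg_kk1 k
  have : (k : ℝ) * ((k : ℝ) - 1) ≤ (k : ℝ) ^ 2 := by nlinarith [Nat.cast_nonneg (α := ℝ) k]
  gcongr

lemma M2 (x : ℝ) (hx : 0 ≤ x) :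
    ∑' k : ℕ, (k : ℝ) * ((k : ℝ) - 1) * x ^ k / k ! = x ^ 2 * Real.exp x := by
  rw [Summable.tsum_eq_zero_add (Sum2' x hx)]
  have key : ∀ k : ℕ, ((k + 1 : ℕ) : ℝ) * (((k + 1 : ℕ) : ℝ) - 1) * x ^ (k + 1) / (k + 1)! =
      x * ((k : ℝ) * x ^ k / k !) := by
    intro k
    rw [Nat.factorial_succ]
    push_cast
    field_simp
    ring
  simp only [Nat.cast_zero, zero_mul, zero_div, zero_add]
  rw [tsum_congr key, tsum_mul_left, M1 x hx]
  ring

lemma varDecomp (x : ℝ) (k : ℕ) : ((k : ℝ) - x) ^ 2 * x ^ k / k ! =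
    (k : ℝ) * ((k : ℝ) - 1) * x ^ k / k ! +
      ((1 - 2 * x) * ((k : ℝ) * x ^ k / k !) + x ^ 2 * (x ^ k / k !)) := by
  field_simp
  ring

lemma SumVar (x : ℝ) (hx : 0 ≤ x) :
    Summable (fun k : ℕ => ((k : ℝ) - x) ^ 2 * x ^ k / k !) := by
  have := (Sum2' x hx).add (((Sum1 x hx).mul_left (1 - 2 * x)).add
    ((Real.summable_pow_div_factorial x).mul_left (x ^ 2)))
  exact this.congr (fun k => (varDecomp x k).symm)

lemma Mvar (x : ℝ) (hx : 0 ≤ x) :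
    ∑' k : ℕ, ((k : ℝ) - x) ^ 2 * x ^ k / k ! = x * Real.exp x := by
  rw [tsum_congr (varDecomp x)]
  rw [Summable.tsum_add (Sum2' x hx) (((Sum1 x hx).mul_left (1 - 2 * x)).add
    ((Real.summable_pow_div_factorial x).mul_left (x ^ 2)))]
  rw [Summable.tsum_add ((Sum1 x hx).mul_left (1 - 2 * x))
    ((Real.summable_pow_div_factorial x).mul_left (x ^ 2))]
  rw [tsum_mul_left, tsum_mul_left, M0, M1 x hx, M2 x hx]
  ring

lemma existsD (a : ℕ → ℂ) (ha : a =O[atTop] fun k : ℕ => ((k : ℝ))⁻¹) :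
    ∃ D : ℝ, 0 < D ∧ ∀ k : ℕ, ‖a k‖ ≤ D / (k + 1) := by
  rw [isBigO_iff] at ha
  obtain ⟨C, hC⟩ := ha
  rw [eventually_atTop] at hC
  obtain ⟨N, hN⟩ := hC
  set S : ℝ := (Finset.range (N + 1)).sum (fun k => ‖a k‖ * (k + 1)) with hS
  have hS0 : 0 ≤ S := Finset.sum_nonneg (fun k _ => by positivity)
  refine ⟨max (2 * C + 1) (S + 1), lt_of_lt_of_le (by linarith) (le_max_right _ _), fun k => ?_⟩
  have hk1 : (0 : ℝ) < (k : ℝ) + 1 := by positivity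
  rw [le_div_iff₀ hk1]
  rcases le_or_gt k N with hk | hk
  · have h1 : ‖a k‖ * ((k : ℕ) + 1 : ℝ) ≤ S := by
      rw [hS]
      refine Finset.single_le_sum (f := fun k : ℕ => ‖a k‖ * ((k : ℝ) + 1))
        (fun i _ => by positivity) (Finset.mem_range.2 (by omega))
    calc ‖a k‖ * ((k : ℝ) + 1) ≤ S := by exact_mod_cast h1
    _ ≤ S + 1 := by linarith
    _ ≤ _ := le_max_right _ _
  · have hk1' : 1 ≤ k := by omega
    have hkpos : (0 : ℝ) < (k : ℝ) := by exact_mod_cast (by omega : 0 < k)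
    have hbd := hN k (by omega)
    have hnorm : ‖((k : ℝ))⁻¹‖ = (k : ℝ)⁻¹ := by
      rw [Real.norm_eq_abs, abs_of_nonneg (by positivity)]
    rw [hnorm] at hbd
    have hinv : (k : ℝ)⁻¹ * (k : ℝ) = 1 := inv_mul_cancel₀ (ne_of_gt hkpos)
    have hinvle : (k : ℝ)⁻¹ ≤ 1 := by
      rw [inv_le_one_iff₀]; right; exact_mod_cast hk1'
    have hC0 : 0 ≤ C := by
      by_contra h
      push_neg at h
      have : C * (k : ℝ)⁻¹ < 0 := mul_neg_of_neg_of_pos h (by positivity)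
      have := norm_nonneg (a k); linarith
    have step : ‖a k‖ * ((k : ℝ) + 1) ≤ C * (k : ℝ)⁻¹ * ((k : ℝ) + 1) := by
      have := mul_le_mul_of_nonneg_right hbd (le_of_lt hk1)
      linarith
    have step2 : C * (k : ℝ)⁻¹ * ((k : ℝ) + 1) ≤ 2 * C + 1 := by
      have expand : C * (k : ℝ)⁻¹ * ((k : ℝ) + 1) = C * 1 + C * (k : ℝ)⁻¹ := by
        field_simp
      rw [expand]
      have : C * (k : ℝ)⁻¹ ≤ C * 1 := by
        apply mul_le_mul_of_nonneg_left hinvle hC0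
      linarith
    calc ‖a k‖ * ((k : ℝ) + 1) ≤ 2 * C + 1 := le_trans step step2
    _ ≤ _ := le_max_left _ _

lemma partial_bound (a : ℕ → ℂ) (D : ℝ) (hD : ∀ k : ℕ, ‖a k‖ ≤ D / (k + 1))
    {m n : ℕ} (hmn : m ≤ n) :
    ‖∑ k ∈ Finset.range n, a k - ∑ k ∈ Finset.range m, a k‖ ≤ D * ((n : ℝ) - m) / (m + 1) := by
  have hD0 : 0 ≤ D := by
    have := hD 0; have := norm_nonneg (a 0); simp at this ⊢; nlinarith [hD 0, norm_nonneg (a 0)]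
  rw [← Finset.sum_Ico_eq_sub _ hmn]
  calc ‖∑ k ∈ Finset.Ico m n, a k‖ ≤ ∑ k ∈ Finset.Ico m n, ‖a k‖ := norm_sum_le _ _
  _ ≤ ∑ k ∈ Finset.Ico m n, D / (m + 1) := by
      refine Finset.sum_le_sum (fun k hk => ?_)
      refine le_trans (hD k) ?_
      have hk' := (Finset.mem_Ico.1 hk).1
      have : (m : ℝ) + 1 ≤ (k : ℝ) + 1 := by
        have : (m : ℝ) ≤ k := by exact_mod_cast hk'
        linarith
      gcongr
  _ = (n - m : ℕ) * (D / (m + 1)) := by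
      rw [Finset.sum_const, Nat.card_Ico, nsmul_eq_mul]
  _ = D * ((n : ℝ) - m) / (m + 1) := by
      rw [Nat.cast_sub hmn]; ring

lemma summable_series (c : ℕ → ℂ) (D : ℝ) (hc : ∀ k : ℕ, ‖c k‖ ≤ D * (k + 1)) (x : ℝ) :
    Summable (fun k : ℕ => c k * (x : ℂ) ^ k / k !) := by
  have hD0 : 0 ≤ D := by
    have h0 := hc 0; have := norm_nonneg (c 0); nlinarith
  refine Summable.of_norm_bounded
    ((Real.summable_pow_div_factorial (2 * |x|)).mul_left D) (fun k => ?_)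
  have hk : ((k : ℝ) + 1) ≤ 2 ^ k := by exact_mod_cast (Nat.lt_two_pow_self (n := k))
  have h1 : ‖c k * (x : ℂ) ^ k / (k ! : ℂ)‖ = ‖c k‖ * |x| ^ k / k ! := by
    rw [norm_div, norm_mul, norm_pow, Complex.norm_real, Real.norm_eq_abs,
      Complex.norm_natCast]
  rw [h1, mul_pow]
  calc ‖c k‖ * |x| ^ k / k ! ≤ D * ((k : ℝ) + 1) * |x| ^ k / k ! := by
        gcongr
        exact hc k
  _ ≤ D * 2 ^ k * |x| ^ k / k ! := by gcongr
  _ = D * (2 ^ k * |x| ^ k) / k ! := by ring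
  _ = D * (2 ^ k * |x| ^ k / k !) := by ring

lemma hasDerivAt_series (c : ℕ → ℂ) (D : ℝ) (hc : ∀ k : ℕ, ‖c k‖ ≤ D * (k + 1)) (x : ℝ) :
    HasDerivAt (fun y : ℝ => ∑' k : ℕ, c k * (y : ℂ) ^ k / k !)
      (∑' k : ℕ, c (k + 1) * (x : ℂ) ^ k / k !) x := by
  have hD0 : 0 ≤ D := by
    have h0 := hc 0; have := norm_nonneg (c 0); nlinarith
  set R : ℝ := |x| + 1 with hR
  have hR1 : 1 ≤ R := by rw [hR]; linarith [abs_nonneg x]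
  have hR0 : 0 < R := by linarith
  set u : ℕ → ℝ := fun n => D * ((n : ℝ) + 1) * n * R ^ (n - 1) / n ! with hu
  have hu_sum : Summable u := by
    refine Summable.of_nonneg_of_le (fun n => by positivity) (fun n => ?_)
      ((Real.summable_pow_div_factorial (4 * R)).mul_left D)
    have h1 : ((n : ℝ) + 1) ≤ 2 ^ n := by exact_mod_cast (Nat.lt_two_pow_self (n := n))
    have h2 : (n : ℝ) ≤ 2 ^ n := by exact_mod_cast (Nat.lt_two_pow_self (n := n)).le
    have h3 : R ^ (n - 1) ≤ R ^ n := pow_le_pow_right₀ hR1 (Nat.sub_le n 1)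
    calc D * ((n : ℝ) + 1) * n * R ^ (n - 1) / n ! ≤ D * 2 ^ n * 2 ^ n * R ^ n / n ! := by
          gcongr
    _ = D * ((4 * R) ^ n / n !) := by
          rw [mul_pow, show (4:ℝ)^n = 2^n*2^n from by rw [← mul_pow]; norm_num]
          ring
  set g' : ℕ → ℝ → ℂ := fun n y => c n * ((n : ℂ) * (y : ℂ) ^ (n - 1)) / n ! with hg'def
  have hg : ∀ n : ℕ, ∀ y : ℝ, y ∈ Metric.ball (0 : ℝ) R → HasDerivAt
      (fun y : ℝ => c n * (y : ℂ) ^ n / n !) (g' n y) y := by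
    intro n y _
    have h1 : HasDerivAt (fun z : ℂ => c n * z ^ n / n !)
        (c n * ((n : ℂ) * (y : ℂ) ^ (n - 1)) / n !) (y : ℝ) := by
      simpa using (((hasDerivAt_pow n ((y : ℝ) : ℂ)).const_mul (c n)).div_const ((n ! : ℂ)))
    exact h1.comp_ofReal
  have hg' : ∀ n : ℕ, ∀ y : ℝ, y ∈ Metric.ball (0 : ℝ) R → ‖g' n y‖ ≤ u n := by
    intro n y hy
    have hyR : |y| ≤ R := by
      rw [Metric.mem_ball, Real.dist_eq, sub_zero] at hy; exact hy.le
    have : ‖g' n y‖ = ‖c n‖ * ((n : ℝ) * |y| ^ (n - 1)) / n ! := by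
      rw [hg'def]
      simp [norm_div, norm_mul, norm_pow, Complex.norm_real, Real.norm_eq_abs]
    rw [this, hu]
    calc ‖c n‖ * ((n : ℝ) * |y| ^ (n - 1)) / n !
        ≤ (D * ((n : ℝ) + 1)) * ((n : ℝ) * R ^ (n - 1)) / n ! := by
          gcongr
          all_goals first | exact hc n | exact abs_nonneg y | exact hyR
    _ = D * ((n : ℝ) + 1) * n * R ^ (n - 1) / n ! := by ring
  have hg0 : Summable (fun n : ℕ => c n * ((0 : ℝ) : ℂ) ^ n / n !) := by
    refine summable_of_ne_finset_zero (s := {0}) (fun n hn => ?_)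
    have : n ≠ 0 := by simpa using hn
    simp [zero_pow this]
  have hmem : x ∈ Metric.ball (0 : ℝ) R := by
    rw [Metric.mem_ball, Real.dist_eq, sub_zero]; simp [hR]
  have hmem0 : (0 : ℝ) ∈ Metric.ball (0 : ℝ) R := by
    rw [Metric.mem_ball, dist_self]; linarith
  have key := hasDerivAt_tsum_of_isPreconnected hu_sum Metric.isOpen_ball
    (convex_ball (0 : ℝ) R).isPreconnected hg hg' hmem0 hg0 hmem
  have hsum_g' : Summable (fun n => g' n x) :=
    Summable.of_norm_bounded hu_sum (fun n => hg' n x hmem)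
  have reindex : ∑' n : ℕ, g' n x = ∑' k : ℕ, c (k + 1) * (x : ℂ) ^ k / k ! := by
    rw [Summable.tsum_eq_zero_add hsum_g']
    have h0 : g' 0 x = 0 := by simp [hg'def]
    rw [h0, zero_add]
    refine tsum_congr (fun k => ?_)
    rw [hg'def]
    simp only [Nat.add_sub_cancel]
    rw [Nat.factorial_succ]
    have hfac : ((k ! : ℕ) : ℂ) ≠ 0 := Nat.cast_ne_zero.2 (Nat.factorial_ne_zero k)
    have hk1 : ((k : ℂ) + 1) ≠ 0 := by exact_mod_cast Nat.succ_ne_zero k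
    push_cast
    field_simp
  rw [← reindex]
  exact key

lemma partial_bound' (a : ℕ → ℂ) (D : ℝ) (hD : ∀ k : ℕ, ‖a k‖ ≤ D / (k + 1)) (k n : ℕ) :
    ‖∑ j ∈ Finset.range n, a j - ∑ j ∈ Finset.range k, a j‖ ≤
      D * |(n : ℝ) - k| / ((min n k : ℕ) + 1) := by
  rcases le_total k n with h | h
  · have hc : (k : ℝ) ≤ n := by exact_mod_cast h
    rw [min_eq_right h, abs_of_nonneg (sub_nonneg.2 hc)]
    exact partial_bound a D hD h
  · have hc : (n : ℝ) ≤ k := by exact_mod_cast h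
    rw [min_eq_left h, abs_of_nonpos (sub_nonpos.2 hc), neg_sub, norm_sub_rev]
    exact partial_bound a D hD h

lemma tauberian_bound (a : ℕ → ℂ) (D : ℝ) (hDpos : 0 < D)
    (hD : ∀ k : ℕ, ‖a k‖ ≤ D / (k + 1)) (n : ℕ) (hn : 1 ≤ n) (ε : ℝ) (hε : 0 < ε) :
    ‖(∑ k ∈ Finset.range n, a k) - Real.exp (-(n : ℝ)) •
        ∑' k : ℕ, (∑ j ∈ Finset.range k, a j) * ((n : ℝ) : ℂ) ^ k / (k ! : ℂ)‖ ≤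
      D * ε + D / (ε * n) +
        D * n * Real.exp (-(n : ℝ)) * Real.exp ((n : ℝ) / 2 * Real.log 2) *
          Real.exp ((n : ℝ) / 2) := by
  set s : ℕ → ℂ := fun m => ∑ j ∈ Finset.range m, a j with hs
  set x : ℝ := (n : ℝ) with hxdef
  have hx : 0 < x := by rw [hxdef]; exact_mod_cast hn
  have hx1 : 1 ≤ x := by rw [hxdef]; exact_mod_cast hn
  set P : ℕ → ℝ := fun k => Real.exp (-x) * (x ^ k / k !) with hPdef
  have hPnn : ∀ k, 0 ≤ P k := fun k => by rw [hPdef]; positivity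
  have hQ := Real.summable_pow_div_factorial x
  have hP : Summable P := hQ.mul_left _
  have hP1 : ∑' k, P k = 1 := by
    rw [hPdef, tsum_mul_left, M0, ← Real.exp_add, neg_add_cancel, Real.exp_zero]
  have hPvar : Summable (fun k => P k * ((k : ℝ) - x) ^ 2) :=
    ((SumVar x hx.le).mul_left (Real.exp (-x))).congr (fun k => by rw [hPdef]; ring)
  have hP2 : ∑' k, P k * ((k : ℝ) - x) ^ 2 = x := by
    have e : ∀ k : ℕ, P k * ((k : ℝ) - x) ^ 2
        = Real.exp (-x) * (((k : ℝ) - x) ^ 2 * x ^ k / k !) := fun k => by rw [hPdef]; ring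
    rw [tsum_congr e, tsum_mul_left, Mvar x hx.le, mul_comm x (Real.exp x), ← mul_assoc,
      ← Real.exp_add, neg_add_cancel, Real.exp_zero, one_mul]
  have hsnorm : ∀ m : ℕ, ‖s m‖ ≤ D * m := by
    intro m
    have h := partial_bound a D hD (Nat.zero_le m)
    simpa using h
  -- summability of P k * ‖s n - s k‖
  have hbase : Summable (fun k : ℕ => Real.exp (-x) *
      (‖s n‖ * (x ^ k / k !) + D * ((k : ℝ) * x ^ k / k !))) :=
    ((hQ.mul_left ‖s n‖).add ((Sum1 x hx.le).mul_left D)).mul_left _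
  have hnormsum : Summable (fun k : ℕ => P k * ‖s n - s k‖) := by
    refine Summable.of_nonneg_of_le (fun k => by positivity) (fun k => ?_) hbase
    have h1 : ‖s n - s k‖ ≤ ‖s n‖ + D * k :=
      le_trans (norm_sub_le _ _) (by linarith [hsnorm k])
    calc P k * ‖s n - s k‖ ≤ P k * (‖s n‖ + D * k) := by
          exact mul_le_mul_of_nonneg_left h1 (hPnn k)
    _ = Real.exp (-x) * (‖s n‖ * (x ^ k / k !) + D * ((k : ℝ) * x ^ k / k !)) := by
          rw [hPdef]; ring
  have hPsk : Summable (fun k : ℕ => P k • s k) := by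
    refine Summable.of_norm_bounded hbase (fun k => ?_)
    rw [norm_smul, Real.norm_eq_abs, abs_of_nonneg (hPnn k)]
    calc P k * ‖s k‖ ≤ P k * (‖s n‖ + D * k) := by
          refine mul_le_mul_of_nonneg_left ?_ (hPnn k)
          linarith [hsnorm k, norm_nonneg (s n)]
    _ = _ := by rw [hPdef]; ring
  -- step: rewrite difference as a tsum
  have hdiff : s n - Real.exp (-x) • ∑' k : ℕ, s k * (x : ℂ) ^ k / k !
      = ∑' k : ℕ, P k • (s n - s k) := by
    have h1 : s n = ∑' k : ℕ, P k • s n := by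
      rw [Summable.tsum_smul_const hP, hP1, one_smul]
    have h2 : Real.exp (-x) • ∑' k : ℕ, s k * (x : ℂ) ^ k / k !
        = ∑' k : ℕ, P k • s k := by
      rw [← Summable.tsum_const_smul (Real.exp (-x)) (summable_series s (2 * D)
        (fun k => by
          have := hsnorm k
          have : ‖s k‖ ≤ 2 * D * ((k : ℝ) + 1) := by nlinarith [hsnorm k]
          exact this) x)]
      refine tsum_congr (fun k => ?_)
      rw [hPdef]
      simp only [Complex.real_smul]
      push_cast
      ring
    have h3 : ∑' k : ℕ, P k • (s n - s k) = (∑' k : ℕ, P k • s n) - ∑' k : ℕ, P k • s k := by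
      rw [← Summable.tsum_sub (hP.smul_const (s n)) hPsk]
      exact tsum_congr (fun k => smul_sub (P k) (s n) (s k))
    rw [h3, h2, ← h1]
  rw [hdiff]
  -- norm bound
  have hnorm_le : ‖∑' k : ℕ, P k • (s n - s k)‖ ≤ ∑' k : ℕ, P k * ‖s n - s k‖ := by
    have := norm_tsum_le_tsum_norm (f := fun k : ℕ => P k • (s n - s k)) ?_
    · refine le_trans this (le_of_eq (tsum_congr (fun k => ?_)))
      rw [norm_smul, Real.norm_eq_abs, abs_of_nonneg (hPnn k)]
    · refine hnormsum.congr (fun k => ?_)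
      rw [norm_smul, Real.norm_eq_abs, abs_of_nonneg (hPnn k)]
  refine le_trans hnorm_le ?_
  -- the two bounding series
  set C2 : ℝ := D * x * Real.exp (-x) * Real.exp (x / 2 * Real.log 2) with hC2
  have hC2nn : 0 ≤ C2 := by rw [hC2]; positivity
  set g : ℕ → ℝ := fun k => (2 * D / x) * (P k * |(k : ℝ) - x|) with hg
  set h : ℕ → ℝ := fun k => if 2 * k < n then C2 * ((x / 2) ^ k / k !) else 0 with hh
  have habs_sum : Summable (fun k : ℕ => P k * |(k : ℝ) - x|) := by
    refine Summable.of_nonneg_of_le (fun k => by positivity) (fun k => ?_)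
      (((Sum1 x hx.le).add (hQ.mul_left x)).mul_left (Real.exp (-x)))
    have habs : |(k : ℝ) - x| ≤ (k : ℝ) + x := by
      have := abs_sub (k : ℝ) x
      have hxx : |x| = x := abs_of_nonneg hx.le
      have hkk : |(k : ℝ)| = k := abs_of_nonneg (Nat.cast_nonneg k)
      rw [hxx, hkk] at this
      linarith
    calc P k * |(k : ℝ) - x| ≤ P k * ((k : ℝ) + x) :=
          mul_le_mul_of_nonneg_left habs (hPnn k)
    _ = Real.exp (-x) * ((k : ℝ) * x ^ k / k ! + x * (x ^ k / k !)) := by rw [hPdef]; ring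
  have hgsum : Summable g := habs_sum.mul_left _
  have hhsum : Summable h := by
    refine Summable.of_nonneg_of_le (fun k => ?_) (fun k => ?_)
      ((Real.summable_pow_div_factorial (x / 2)).mul_left C2)
    · rw [hh]
      dsimp only
      split
      · positivity
      · exact le_rfl
    · rw [hh]
      dsimp only
      split
      · exact le_rfl
      · positivity
  -- pointwise bound
  have e5 : ∀ k : ℕ, P k * ‖s n - s k‖ ≤ g k + h k := by
    intro k
    by_cases hk : 2 * k < n
    · rw [hg, hh]
      dsimp only
      rw [if_pos hk]
      have hb : ‖s n - s k‖ ≤ D * x := by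
        have hbb := partial_bound a D hD (le_of_lt (by omega : k < n))
        refine le_trans hbb ?_
        rw [div_le_iff₀ (by positivity : (0 : ℝ) < (k : ℝ) + 1), hxdef]
        have h1 : (0:ℝ) ≤ (k : ℝ) := Nat.cast_nonneg k
        nlinarith [mul_nonneg hDpos.le h1,
          mul_nonneg (mul_nonneg hDpos.le (Nat.cast_nonneg (α := ℝ) n)) h1]
      have hxk : x ^ k ≤ Real.exp (x / 2 * Real.log 2) * (x / 2) ^ k := by
        have h2k : (2 : ℝ) ^ k ≤ Real.exp (x / 2 * Real.log 2) := by
          have hk2 : (k : ℝ) ≤ x / 2 := by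
            have h2 : ((2 * k : ℕ) : ℝ) ≤ x := by
              rw [hxdef]; exact_mod_cast (by omega : 2 * k ≤ n)
            push_cast at h2
            linarith
          have hlog : (k : ℝ) * Real.log 2 ≤ x / 2 * Real.log 2 :=
            mul_le_mul_of_nonneg_right hk2 (Real.log_nonneg one_le_two)
          calc (2 : ℝ) ^ k = Real.exp ((k : ℝ) * Real.log 2) := by
                rw [Real.exp_nat_mul, Real.exp_log two_pos]
          _ ≤ Real.exp (x / 2 * Real.log 2) := Real.exp_le_exp.2 hlog
        calc x ^ k = 2 ^ k * (x / 2) ^ k := by rw [← mul_pow]; ring_nf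
        _ ≤ Real.exp (x / 2 * Real.log 2) * (x / 2) ^ k := by gcongr
      have key : x ^ k / (k ! : ℝ) ≤ Real.exp (x / 2 * Real.log 2) * ((x / 2) ^ k / k !) := by
        rw [mul_div_assoc']
        gcongr
      have hP2k : P k * (D * x) ≤ C2 * ((x / 2) ^ k / k !) := by
        rw [hPdef, hC2]
        dsimp only
        calc Real.exp (-x) * (x ^ k / k !) * (D * x)
            ≤ Real.exp (-x) * (Real.exp (x / 2 * Real.log 2) * ((x / 2) ^ k / k !)) * (D * x) := by
              gcongr
        _ = D * x * Real.exp (-x) * Real.exp (x / 2 * Real.log 2) * ((x / 2) ^ k / k !) := by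
              ring
      calc P k * ‖s n - s k‖ ≤ P k * (D * x) := mul_le_mul_of_nonneg_left hb (hPnn k)
      _ ≤ C2 * ((x / 2) ^ k / k !) := hP2k
      _ ≤ 2 * D / x * (P k * |(k : ℝ) - x|) + C2 * ((x / 2) ^ k / k !) :=
            le_add_of_nonneg_left (by positivity)
    · rw [hg, hh]
      dsimp only
      rw [if_neg hk, add_zero]
      have hkn : n ≤ 2 * k := by omega
      have hmin : x / 2 ≤ ((min n k : ℕ) : ℝ) + 1 := by
        rcases le_total n k with hnk | hkn'
        · rw [min_eq_left hnk]
          rw [hxdef]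
          push_cast
          linarith
        · rw [min_eq_right hkn']
          have h2 : (n : ℝ) ≤ 2 * k := by exact_mod_cast hkn
          rw [hxdef]
          push_cast
          linarith
      have hb := partial_bound' a D hD k n
      have hb2 : D * |x - (k : ℝ)| / (((min n k : ℕ) : ℝ) + 1) ≤ D * |x - (k : ℝ)| / (x / 2) :=
        div_le_div_of_nonneg_left (by positivity) (by positivity) hmin
      have hb3 : ‖s n - s k‖ ≤ 2 * D * |(k : ℝ) - x| / x := by
        refine le_trans hb (le_trans hb2 (le_of_eq ?_))
        rw [abs_sub_comm]
        field_simp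
      calc P k * ‖s n - s k‖ ≤ P k * (2 * D * |(k : ℝ) - x| / x) :=
            mul_le_mul_of_nonneg_left hb3 (hPnn k)
      _ = 2 * D / x * (P k * |(k : ℝ) - x|) := by ring
  have hgh : Summable (fun k => g k + h k) := hgsum.add hhsum
  refine le_trans (Summable.tsum_le_tsum e5 hnormsum hgh) ?_
  rw [Summable.tsum_add hgsum hhsum]
  have hsum_rhs : Summable (fun k : ℕ =>
      (ε * x / 2) * P k + (1 / (2 * ε * x)) * (P k * ((k : ℝ) - x) ^ 2)) :=
    (hP.mul_left _).add (hPvar.mul_left _)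
  have hgval : ∑' k, g k ≤ D * ε + D / (ε * x) := by
    rw [hg]
    dsimp only
    rw [tsum_mul_left]
    have hamgm : ∀ k : ℕ, P k * |(k : ℝ) - x| ≤
        (ε * x / 2) * P k + (1 / (2 * ε * x)) * (P k * ((k : ℝ) - x) ^ 2) := by
      intro k
      have ht : |(k : ℝ) - x| ≤ ε * x / 2 + ((k : ℝ) - x) ^ 2 / (2 * ε * x) := by
        rw [div_add_div _ _ (by norm_num) (by positivity : (2 : ℝ) * ε * x ≠ 0), le_div_iff₀ (by positivity)]
        nlinarith [sq_nonneg (ε * x - |(k : ℝ) - x|), sq_abs ((k : ℝ) - x),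
          abs_nonneg ((k : ℝ) - x), mul_pos hε hx]
      calc P k * |(k : ℝ) - x| ≤ P k * (ε * x / 2 + ((k : ℝ) - x) ^ 2 / (2 * ε * x)) :=
            mul_le_mul_of_nonneg_left ht (hPnn k)
      _ = (ε * x / 2) * P k + (1 / (2 * ε * x)) * (P k * ((k : ℝ) - x) ^ 2) := by
            field_simp
    calc 2 * D / x * ∑' k, P k * |(k : ℝ) - x|
        ≤ 2 * D / x * ((ε * x / 2) * 1 + (1 / (2 * ε * x)) * x) := by
          refine mul_le_mul_of_nonneg_left ?_ (by positivity)
          refine le_trans (Summable.tsum_le_tsum hamgm habs_sum hsum_rhs) ?_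
          have hP1' : tsum P = 1 := hP1
          have e1g : ∑' k : ℕ, (ε * x / 2) * P k = ε * x / 2 * 1 := by
            rw [tsum_mul_left, hP1']
          have e2g : ∑' k : ℕ, (1 / (2 * ε * x)) * (P k * ((k : ℝ) - x) ^ 2)
              = 1 / (2 * ε * x) * x := by
            rw [tsum_mul_left, hP2]
          rw [Summable.tsum_add (hP.mul_left _) (hPvar.mul_left _), e1g, e2g]
    _ = D * ε + D / (ε * x) := by field_simp
  have hhval : ∑' k, h k ≤ C2 * Real.exp (x / 2) := by
    refine le_trans (Summable.tsum_le_tsum (fun k => ?_) hhsum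
      ((Real.summable_pow_div_factorial (x / 2)).mul_left C2)) ?_
    · rw [hh]
      dsimp only
      split
      · exact le_rfl
      · positivity
    · rw [tsum_mul_left, M0]
  linarith [hgval, hhval]

/-- If `a_k = O(1/k)` and `f(t) = e^{-t} ∑ a_k t^k / k!` is Lebesgue integrable on
`(0,∞)`, then `∑ a_k` converges (as a series, i.e. its partial sums converge)
with sum `∫_0^∞ f(t) dt`. -/
theorem series_eq_integral_of_integrable (a : ℕ → ℂ)
    (ha : a =O[atTop] fun k : ℕ => ((k : ℝ))⁻¹)
    (f : ℝ → ℂ)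
    (hf : ∀ t : ℝ, f t = Real.exp (-t) • ∑' k : ℕ, a k * (t : ℂ) ^ k / (Nat.factorial k : ℂ))
    (hint : IntegrableOn f (Set.Ioi 0)) :
    Tendsto (fun n => ∑ k ∈ Finset.range n, a k) atTop
      (nhds (∫ t in Set.Ioi (0 : ℝ), f t)) := by
  obtain ⟨D, hDpos, hD⟩ := existsD a ha
  set s : ℕ → ℂ := fun m => ∑ j ∈ Finset.range m, a j with hs
  have hsnorm0 : ∀ m : ℕ, ‖s m‖ ≤ D * m := by
    intro m
    have h := partial_bound a D hD (Nat.zero_le m)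
    simpa using h
  have hsnorm : ∀ k : ℕ, ‖s k‖ ≤ 2 * D * ((k : ℝ) + 1) := by
    intro k
    have h1 := hsnorm0 k
    have h2 : (0 : ℝ) ≤ (k : ℝ) := Nat.cast_nonneg k
    nlinarith
  set S : ℝ → ℂ := fun y => ∑' k : ℕ, s k * (y : ℂ) ^ k / k ! with hS
  set H : ℝ → ℂ := fun y => Real.exp (-y) • S y with hH
  have hderiv : ∀ y : ℝ, HasDerivAt H (f y) y := by
    intro y
    have h1 : HasDerivAt S (∑' k : ℕ, s (k + 1) * (y : ℂ) ^ k / k !) y := by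
      rw [hS]
      exact hasDerivAt_series s (2 * D) hsnorm y
    have h2 : HasDerivAt (fun t : ℝ => Real.exp (-t)) (-Real.exp (-y)) y := by
      convert (hasDerivAt_neg y).exp using 1; ring
    have h3 := h2.smul h1
    have hsum1 : Summable (fun k : ℕ => s (k + 1) * (y : ℂ) ^ k / k !) := by
      refine summable_series (fun k => s (k + 1)) (4 * D) (fun k => ?_) y
      have h4 := hsnorm (k + 1)
      have h5 : (0 : ℝ) ≤ (k : ℝ) := Nat.cast_nonneg k
      push_cast at h4 ⊢
      nlinarith
    have hsum2 : Summable (fun k : ℕ => s k * (y : ℂ) ^ k / k !) :=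
      summable_series s (2 * D) hsnorm y
    have key : (∑' k : ℕ, s (k + 1) * (y : ℂ) ^ k / k !) - S y
        = ∑' k : ℕ, a k * (y : ℂ) ^ k / k ! := by
      rw [hS]
      dsimp only
      rw [← Summable.tsum_sub hsum1 hsum2]
      refine tsum_congr (fun k => ?_)
      have hss : s (k + 1) - s k = a k := by
        rw [hs]
        dsimp only
        rw [Finset.sum_range_succ]
        ring
      rw [div_sub_div_same, ← sub_mul, hss]
    have hfy : f y = Real.exp (-y) • (∑' k : ℕ, s (k + 1) * (y : ℂ) ^ k / k !)
        + (-Real.exp (-y)) • S y := by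
      rw [hf y, ← key, smul_sub, neg_smul]
      abel
    rw [hH, hfy]
    exact h3
  have hH0 : H 0 = 0 := by
    rw [hH, hS]
    dsimp only
    have hz : ∀ k : ℕ, s k * ((0 : ℝ) : ℂ) ^ k / k ! = 0 := by
      intro k
      rcases Nat.eq_zero_or_pos k with h | h
      · subst h
        simp [hs]
      · simp [zero_pow (Nat.pos_iff_ne_zero.mp h)]
    rw [tsum_congr hz, tsum_zero, smul_zero]
  have hint_eq : ∀ y : ℝ, 0 ≤ y → ∫ t in (0 : ℝ)..y, f t = H y := by
    intro y hy
    have hii : IntervalIntegrable f volume 0 y := by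
      rw [intervalIntegrable_iff_integrableOn_Ioc_of_le hy]
      exact hint.mono_set Set.Ioc_subset_Ioi_self
    rw [intervalIntegral.integral_eq_sub_of_hasDerivAt (fun t _ => hderiv t) hii, hH0, sub_zero]
  have hHtend : Tendsto H atTop (𝓝 (∫ t in Set.Ioi (0 : ℝ), f t)) := by
    have h1 := intervalIntegral_tendsto_integral_Ioi 0 hint tendsto_id
    refine Filter.Tendsto.congr' ?_ h1
    exact (eventually_ge_atTop (0 : ℝ)).mono (fun y hy => hint_eq y hy)
  have hHn : Tendsto (fun n : ℕ => H n) atTop (𝓝 (∫ t in Set.Ioi (0 : ℝ), f t)) :=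
    hHtend.comp tendsto_natCast_atTop_atTop
  -- the tail terms tend to zero
  have hc : 0 < (1 - Real.log 2) / 2 := by
    have := Real.log_two_lt_d9
    linarith
  set c : ℝ := (1 - Real.log 2) / 2 with hcdef
  have base : Tendsto (fun y : ℝ => y * Real.exp (-y)) atTop (𝓝 0) := by
    simpa using Real.tendsto_pow_mul_exp_neg_atTop_nhds_zero 1
  have comp1 : Tendsto (fun n : ℕ => c * (n : ℝ)) atTop atTop :=
    (tendsto_natCast_atTop_atTop (R := ℝ)).const_mul_atTop hc
  have comp : Tendsto (fun n : ℕ => (c * (n : ℝ)) * Real.exp (-(c * (n : ℝ)))) atTop (𝓝 0) :=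
    base.comp comp1
  have t2 : Tendsto (fun n : ℕ => D * (n : ℝ) * Real.exp (-(n : ℝ)) *
      Real.exp ((n : ℝ) / 2 * Real.log 2) * Real.exp ((n : ℝ) / 2)) atTop (𝓝 0) := by
    have h6 := comp.const_mul (D / c)
    rw [mul_zero] at h6
    refine h6.congr (fun n => ?_)
    have hexp : Real.exp (-(n : ℝ)) * Real.exp ((n : ℝ) / 2 * Real.log 2) *
        Real.exp ((n : ℝ) / 2) = Real.exp (-(c * (n : ℝ))) := by
      rw [← Real.exp_add, ← Real.exp_add]
      congr 1
      rw [hcdef]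
      ring
    rw [show D * (n : ℝ) * Real.exp (-(n : ℝ)) * Real.exp ((n : ℝ) / 2 * Real.log 2) *
        Real.exp ((n : ℝ) / 2) = D * (n : ℝ) * (Real.exp (-(n : ℝ)) *
        Real.exp ((n : ℝ) / 2 * Real.log 2) * Real.exp ((n : ℝ) / 2)) from by ring, hexp]
    field_simp
  -- Tauberian step
  have hTaub : Tendsto (fun n : ℕ => s n - H n) atTop (𝓝 0) := by
    rw [tendsto_zero_iff_norm_tendsto_zero]
    rw [Metric.tendsto_atTop]
    intro ε hε
    set ε' : ℝ := ε / (4 * D) with hε'def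
    have hε' : 0 < ε' := by rw [hε'def]; positivity
    have t1 : Tendsto (fun n : ℕ => D / (ε' * (n : ℝ))) atTop (𝓝 0) := by
      have h7 := tendsto_const_div_atTop_nhds_zero_nat (D / ε')
      refine h7.congr (fun n => ?_)
      rw [div_div]
    have htail := t1.add t2
    rw [add_zero] at htail
    rw [Metric.tendsto_atTop] at htail
    obtain ⟨N1, hN1⟩ := htail (ε / 2) (by linarith)
    refine ⟨max N1 1, fun n hn => ?_⟩
    have hn1 : 1 ≤ n := le_trans (le_max_right N1 1) hn
    have hnN1 : N1 ≤ n := le_trans (le_max_left N1 1) hn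
    have hb := tauberian_bound a D hDpos hD n hn1 ε' hε'
    have hb' : ‖s n - H n‖ ≤ D * ε' + D / (ε' * n) + D * n * Real.exp (-(n : ℝ)) *
        Real.exp ((n : ℝ) / 2 * Real.log 2) * Real.exp ((n : ℝ) / 2) := by
      rw [hH, hS, hs]
      exact hb
    have htl := hN1 n hnN1
    rw [dist_zero_right, Real.norm_eq_abs] at htl
    have htl' : D / (ε' * n) + D * n * Real.exp (-(n : ℝ)) *
        Real.exp ((n : ℝ) / 2 * Real.log 2) * Real.exp ((n : ℝ) / 2) < ε / 2 :=
      lt_of_le_of_lt (le_abs_self _) htl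
    have hDe : D * ε' = ε / 4 := by
      rw [hε'def]
      field_simp
    rw [dist_zero_right, Real.norm_eq_abs, abs_of_nonneg (norm_nonneg _)]
    calc ‖s n - H n‖ ≤ D * ε' + (D / (ε' * n) + D * n * Real.exp (-(n : ℝ)) *
          Real.exp ((n : ℝ) / 2 * Real.log 2) * Real.exp ((n : ℝ) / 2)) := by linarith
    _ < ε / 4 + ε / 2 := by rw [hDe]; linarith
    _ < ε := by linarith
  have hfinal := hTaub.add hHn
  rw [zero_add] at hfinal
  refine hfinal.congr (fun n => ?_)
  rw [sub_add_cancel]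
end
end

section
/- For each n ≥ 0, all roots of the generalised Laguerre polynomial L_n^{(1)}(t) = ∑_{k=0}^n C(n+1, k+1) (−1)^k t^k / k! lie in the open interval (0, 4(n+1)); consequently |L_n^{(1)}(t)| = (−1)^n L_n^{(1)}(t) for all t ≥ 4(n+1). -/
open Filter Topology

noncomputable section

/-- The generalised Laguerre polynomial `L_n^{(1)}`. -/
def lag (n : ℕ) (t : ℝ) : ℝ :=
  ∑ k ∈ Finset.range (n + 1),
    ((n + 1).choose (k + 1) : ℝ) * (-1) ^ k / (Nat.factorial k : ℝ) * t ^ k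

lemma key (m k : ℕ) :
    (m+2) * (m+3).choose (k+2) + (m+2) * (m+1).choose (k+2)
      = (2*m+4) * (m+2).choose (k+2) + (k+1) * (m+2).choose (k+1) := by
  rcases le_or_gt k (m+1) with hk | hk
  · have h1 : (m+3).choose (k+2) = (m+2).choose (k+1) + (m+2).choose (k+2) :=
      Nat.choose_succ_succ _ _
    have h2 : (m+2).choose (k+2) = (m+1).choose (k+1) + (m+1).choose (k+2) :=
      Nat.choose_succ_succ _ _
    have h3 : (m+2) * (m+1).choose (k+1) = (m+2).choose (k+2) * (k+2) :=
      Nat.add_one_mul_choose_eq (m+1) (k+1)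
    have h4 : (m+2).choose (k+2) * (k+2) = (m+2).choose (k+1) * (m+2 - (k+1)) :=
      Nat.choose_succ_right_eq (m+2) (k+1)
    have hs : m + 2 - (k+1) = m + 1 - k := by omega
    rw [hs] at h4
    have hs2 : m + 1 - k + (k + 1) = m + 2 := by omega
    zify [Nat.le_sub_iff_add_le] at *
    linear_combination ((m:ℤ)+2) * h1 - ((m:ℤ)+2) * h2 - h3 - h4 - ((m+2).choose (k+1) : ℤ) * hs2
  · have e1 : (m+3).choose (k+2) = 0 := Nat.choose_eq_zero_of_lt (by omega)
    have e2 : (m+1).choose (k+2) = 0 := Nat.choose_eq_zero_of_lt (by omega)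
    have e3 : (m+2).choose (k+2) = 0 := Nat.choose_eq_zero_of_lt (by omega)
    have e4 : (m+2).choose (k+1) = 0 := Nat.choose_eq_zero_of_lt (by omega)
    simp [e1,e2,e3,e4]

lemma keyR (m k : ℕ) (t : ℝ) :
    ((m:ℝ)+2) * (((m+3).choose (k+2):ℝ) * (-1)^(k+1) / ((k+1).factorial : ℝ) * t^(k+1))
      = (2*(m:ℝ)+4) * (((m+2).choose (k+2):ℝ) * (-1)^(k+1) / ((k+1).factorial : ℝ) * t^(k+1))
        - (((m+2).choose (k+1):ℝ) * (-1)^k / ((k).factorial : ℝ) * t^(k+1))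
        - ((m:ℝ)+2) * (((m+1).choose (k+2):ℝ) * (-1)^(k+1) / ((k+1).factorial : ℝ) * t^(k+1)) := by
  have hkR : ((m:ℝ)+2) * ((m+3).choose (k+2):ℝ) + ((m:ℝ)+2) * ((m+1).choose (k+2):ℝ)
      = (2*(m:ℝ)+4) * ((m+2).choose (k+2):ℝ) + ((k:ℝ)+1) * ((m+2).choose (k+1):ℝ) := by
    exact_mod_cast key m k
  have hf : ((k+1).factorial : ℝ) = ((k:ℝ)+1) * (k.factorial : ℝ) := by
    push_cast [Nat.factorial_succ]; ring
  have hf0 : (k.factorial : ℝ) ≠ 0 := by positivity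
  have hf1 : ((k:ℝ)+1) ≠ 0 := by positivity
  have hD : (((m+2).choose (k+1):ℝ) * (-1)^k / ((k).factorial : ℝ) * t^(k+1))
      = ((k:ℝ)+1) * ((m+2).choose (k+1):ℝ) * (-1)^k / ((k+1).factorial : ℝ) * t^(k+1) := by
    rw [hf]; field_simp
  rw [hD]
  linear_combination ((-1:ℝ)^(k+1) * t^(k+1) / ((k+1).factorial : ℝ)) * hkR

lemma pad (N : ℕ) (t : ℝ) {M : ℕ} (h : N ≤ M) :
    lag N t = ∑ k ∈ Finset.range (M+1),
      ((N+1).choose (k+1):ℝ) * (-1)^k / (k.factorial:ℝ) * t^k := by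
  unfold lag
  apply Finset.sum_subset (Finset.range_subset_range.mpr (by omega))
  intro x hx hnx
  simp only [Finset.mem_range, not_lt] at hnx
  have : (N+1).choose (x+1) = 0 := Nat.choose_eq_zero_of_lt (by omega)
  simp [this]

lemma lag_rec (m : ℕ) (t : ℝ) :
    ((m:ℝ)+2) * lag (m+2) t
      = (2*(m:ℝ)+4 - t) * lag (m+1) t - ((m:ℝ)+2) * lag m t := by
  have hA : lag (m+2) t
      = (∑ k ∈ Finset.range (m+2),
          ((m+3).choose (k+2):ℝ) * (-1)^(k+1) / ((k+1).factorial:ℝ) * t^(k+1)) + ((m:ℝ)+3) := by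
    show (∑ k ∈ Finset.range (m+2+1),
        ((m+3).choose (k+1):ℝ) * (-1)^k / (k.factorial:ℝ) * t^k) = _
    rw [Finset.sum_range_succ']
    norm_num <;> push_cast <;> ring
  have hB : lag (m+1) t
      = (∑ k ∈ Finset.range (m+2),
          ((m+2).choose (k+2):ℝ) * (-1)^(k+1) / ((k+1).factorial:ℝ) * t^(k+1)) + ((m:ℝ)+2) := by
    rw [pad (m+1) t (show m+1 ≤ m+2 by omega), Finset.sum_range_succ']
    norm_num <;> push_cast <;> ring
  have hE : lag m t
      = (∑ k ∈ Finset.range (m+2),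
          ((m+1).choose (k+2):ℝ) * (-1)^(k+1) / ((k+1).factorial:ℝ) * t^(k+1)) + ((m:ℝ)+1) := by
    rw [pad m t (show m ≤ m+2 by omega), Finset.sum_range_succ']
    norm_num <;> push_cast <;> ring
  have hBt : t * lag (m+1) t
      = ∑ k ∈ Finset.range (m+2),
          ((m+2).choose (k+1):ℝ) * (-1)^k / (k.factorial:ℝ) * t^(k+1) := by
    unfold lag
    rw [Finset.mul_sum]
    exact Finset.sum_congr rfl fun k _ => by ring
  have key' : ((m:ℝ)+2) * (∑ k ∈ Finset.range (m+2),
          ((m+3).choose (k+2):ℝ) * (-1)^(k+1) / ((k+1).factorial:ℝ) * t^(k+1))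
      = (2*(m:ℝ)+4) * (∑ k ∈ Finset.range (m+2),
          ((m+2).choose (k+2):ℝ) * (-1)^(k+1) / ((k+1).factorial:ℝ) * t^(k+1))
        - (∑ k ∈ Finset.range (m+2),
          ((m+2).choose (k+1):ℝ) * (-1)^k / (k.factorial:ℝ) * t^(k+1))
        - ((m:ℝ)+2) * (∑ k ∈ Finset.range (m+2),
          ((m+1).choose (k+2):ℝ) * (-1)^(k+1) / ((k+1).factorial:ℝ) * t^(k+1)) := by
    rw [Finset.mul_sum, Finset.mul_sum, Finset.mul_sum, ← Finset.sum_sub_distrib,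
      ← Finset.sum_sub_distrib]
    exact Finset.sum_congr rfl fun k _ => keyR m k t
  rw [hA, hE]
  linear_combination key' - (2*(m:ℝ)+4) * hB + hBt

lemma lag_zero' (t : ℝ) : lag 0 t = 1 := by unfold lag; simp

lemma lag_one' (t : ℝ) : lag 1 t = 2 - t := by
  unfold lag
  rw [Finset.sum_range_succ, Finset.sum_range_succ, Finset.sum_range_zero]
  norm_num
  ring

lemma lag_pos_of_nonpos (n : ℕ) (t : ℝ) (ht : t ≤ 0) : 0 < lag n t := by
  unfold lag
  have h0 : (0:ℕ) ∈ Finset.range (n+1) := by simp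
  have hterm : ∀ k ∈ Finset.range (n+1),
      0 ≤ ((n+1).choose (k+1):ℝ) * (-1)^k / (k.factorial:ℝ) * t^k := by
    intro k _
    have he : ((n+1).choose (k+1):ℝ) * (-1)^k / (k.factorial:ℝ) * t^k
        = ((n+1).choose (k+1):ℝ) / (k.factorial:ℝ) * (-t)^k := by
      rw [neg_pow]; ring
    rw [he]
    apply mul_nonneg (by positivity)
    exact pow_nonneg (by linarith) k
  have hle := Finset.single_le_sum hterm h0
  have h0v : ((n+1).choose (0+1):ℝ) * (-1)^0 / ((0:ℕ).factorial:ℝ) * t^0 = ((n:ℝ)+1) := by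
    simp [Nat.choose_one_right]
  rw [h0v] at hle
  have : (0:ℝ) < (n:ℝ)+1 := by positivity
  linarith

lemma lag_step (n : ℕ) (t : ℝ) (ht : 4*((n:ℝ)+1) ≤ t) :
    ∀ m, m ≤ n → 0 < (-1:ℝ)^m * lag m t ∧
      (-1:ℝ)^m * lag m t ≤ (-1:ℝ)^(m+1) * lag (m+1) t := by
  have hn0 : (0:ℝ) ≤ (n:ℝ) := Nat.cast_nonneg n
  have ht4 : (4:ℝ) ≤ t := by nlinarith
  intro m
  induction m with
  | zero =>
    intro _
    refine ⟨by simp [lag_zero'], ?_⟩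
    have hl1 : lag (0+1) t = 2 - t := lag_one' t
    rw [hl1, lag_zero']
    norm_num
    linarith
  | succ m ih =>
    intro hm
    have hm' : m ≤ n := Nat.le_of_succ_le hm
    obtain ⟨h1, h2⟩ := ih hm'
    have e1 : ((-1:ℝ))^(m+1) = -(-1:ℝ)^m := by rw [pow_add]; norm_num
    have e2 : ((-1:ℝ))^(m+2) = (-1:ℝ)^m := by rw [pow_add]; norm_num
    have hpos : 0 < (-1:ℝ)^(m+1) * lag (m+1) t := lt_of_lt_of_le h1 h2
    refine ⟨hpos, ?_⟩
    rw [e1] at h2 hpos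
    have hmn : ((m:ℝ)+1) ≤ (n:ℝ) := by exact_mod_cast hm
    have ht2 : 4*((m:ℝ)+2) ≤ t := by nlinarith
    have hrec2 : ((m:ℝ)+2) * ((-1:ℝ)^m * lag (m+2) t)
        = (2*(m:ℝ)+4 - t) * ((-1:ℝ)^m * lag (m+1) t)
          - ((m:ℝ)+2) * ((-1:ℝ)^m * lag m t) := by
      linear_combination ((-1:ℝ)^m) * lag_rec m t
    show (-1:ℝ)^(m+1) * lag (m+1) t ≤ (-1:ℝ)^(m+2) * lag (m+2) t
    rw [e1, e2]
    have hm2 : (0:ℝ) < (m:ℝ)+2 := by positivity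
    have hprod : 0 ≤ (t - (4*(m:ℝ)+8)) * (-((-1:ℝ)^m * lag (m+1) t)) :=
      mul_nonneg (by linarith) (by linarith)
    have hfinal : 0 ≤ ((m:ℝ)+2) * (((-1:ℝ)^m * lag (m+2) t) + ((-1:ℝ)^m * lag (m+1) t)) := by
      nlinarith [mul_le_mul_of_nonneg_left h2 (le_of_lt hm2)]
    nlinarith [hfinal, hm2]

/-- All roots of `L_n^{(1)}` lie in `(0, 4(n+1))`; consequently
`|L_n^{(1)}(t)| = (-1)^n L_n^{(1)}(t)` for `t ≥ 4(n+1)`. -/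
theorem lag_roots_and_sign (n : ℕ) :
    (∀ t : ℝ, lag n t = 0 → 0 < t ∧ t < 4 * (n + 1)) ∧
    (∀ t : ℝ, 4 * (n + 1) ≤ t → |lag n t| = (-1) ^ n * lag n t) := by
  have hsign : ∀ t : ℝ, 4*((n:ℝ)+1) ≤ t → 0 < (-1:ℝ)^n * lag n t :=
    fun t ht => (lag_step n t ht n le_rfl).1
  constructor
  · intro t ht
    constructor
    · by_contra h
      push_neg at h
      exact absurd ht (ne_of_gt (lag_pos_of_nonpos n t h))
    · by_contra h
      push_neg at h
      have h2 := hsign t h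
      rw [ht, mul_zero] at h2
      exact lt_irrefl 0 h2
  · intro t ht
    have h := hsign t ht
    have habs : |lag n t| = |(-1:ℝ)^n * lag n t| := by
      rw [abs_mul, abs_pow, abs_neg, abs_one, one_pow, one_mul]
    rw [habs, abs_of_pos h]
end
end

section
/- Let T be the Cesàro operator on c and x ∈ c. If the orbit (Tⁿx)_{n≥0} converges weakly in c, then x_0 = lim_{k→∞} x_k. -/
open Filter Topology

noncomputable section

/-- The space `c` of convergent complex sequences, as a subspace of the bounded
sequences (bounded continuous functions on `ℕ`), with the supremum norm. -/
def convSeqs : Submodule ℂ (BoundedContinuousFunction ℕ ℂ) where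
  carrier := {x | ∃ l : ℂ, Tendsto (fun k => x k) atTop (nhds l)}
  add_mem' := by
    rintro x y ⟨a, ha⟩ ⟨b, hb⟩
    exact ⟨a + b, by simpa using ha.add hb⟩
  zero_mem' := ⟨0, by simp⟩
  smul_mem' := by
    rintro cst x ⟨a, ha⟩
    exact ⟨cst • a, by simpa using ha.const_smul cst⟩

/-- `T` acts as the Cesàro operator. -/
def IsCesaro (T : convSeqs →L[ℂ] convSeqs) : Prop :=
  ∀ x : convSeqs, ∀ k : ℕ,
    (T x : BoundedContinuousFunction ℕ ℂ) k
      = ((k : ℂ) + 1)⁻¹ * ∑ j ∈ Finset.range (k + 1), (x : BoundedContinuousFunction ℕ ℂ) j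

def seqLim (x : convSeqs) : ℂ := x.2.choose

lemma seqLim_spec (x : convSeqs) :
    Tendsto (fun k => (x : BoundedContinuousFunction ℕ ℂ) k) atTop (nhds (seqLim x)) :=
  x.2.choose_spec

lemma seqLim_eq {x : convSeqs} {l : ℂ}
    (h : Tendsto (fun k => (x : BoundedContinuousFunction ℕ ℂ) k) atTop (nhds l)) :
    seqLim x = l := tendsto_nhds_unique (seqLim_spec x) h

def limCLM : convSeqs →L[ℂ] ℂ :=
  LinearMap.mkContinuous
    { toFun := seqLim
      map_add' := fun x y => seqLim_eq (by
        simpa using (seqLim_spec x).add (seqLim_spec y))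
      map_smul' := fun c x => seqLim_eq (by
        simpa using (seqLim_spec x).const_smul c) }
    1 (fun x => by
      simp only [LinearMap.coe_mk, AddHom.coe_mk, one_mul]
      refine le_of_tendsto (seqLim_spec x).norm (Eventually.of_forall fun k => ?_)
      exact (x : BoundedContinuousFunction ℕ ℂ).norm_coe_le_norm k)

lemma limCLM_apply (x : convSeqs) : limCLM x = seqLim x := rfl

def evCLM (k : ℕ) : convSeqs →L[ℂ] ℂ :=
  (BoundedContinuousFunction.evalCLM (𝕜 := ℂ) k).comp convSeqs.subtypeL

lemma evCLM_apply (k : ℕ) (x : convSeqs) :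
    evCLM k x = (x : BoundedContinuousFunction ℕ ℂ) k := rfl

/-- The Cesàro operator preserves the limit. -/
lemma cesaro_lim {T : convSeqs →L[ℂ] convSeqs} (hT : IsCesaro T) (x : convSeqs) :
    seqLim (T x) = seqLim x := by
  refine seqLim_eq ?_
  have h := ((seqLim_spec x).cesaro_smul).comp (tendsto_add_atTop_nat 1)
  refine h.congr fun k => ?_
  simp only [Function.comp_apply, hT x k, Complex.real_smul]
  push_cast
  ring

/-- A fixed point of the Cesàro operator is constant. -/
lemma cesaro_fixed_const {T : convSeqs →L[ℂ] convSeqs} (hT : IsCesaro T)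
    (y : convSeqs) (hy : T y = y) (k : ℕ) :
    (y : BoundedContinuousFunction ℕ ℂ) k = (y : BoundedContinuousFunction ℕ ℂ) 0 := by
  induction k using Nat.strong_induction_on with
  | _ k ih =>
    match k with
    | 0 => rfl
    | k + 1 =>
      have h := hT y (k + 1)
      rw [hy] at h
      have hsum : ∑ j ∈ Finset.range (k + 2), (y : BoundedContinuousFunction ℕ ℂ) j
          = (k + 1 : ℂ) * (y : BoundedContinuousFunction ℕ ℂ) 0
            + (y : BoundedContinuousFunction ℕ ℂ) (k + 1) := by
        rw [Finset.sum_range_succ]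
        congr 1
        rw [Finset.sum_congr rfl fun j hj => ih j (Finset.mem_range.mp hj)]
        simp only [Finset.sum_const, Finset.card_range, nsmul_eq_mul]
        push_cast
        ring
      rw [hsum] at h
      have hne : ((k : ℂ) + 1 + 1) ≠ 0 := by
        have := Nat.cast_add_one_ne_zero (R := ℂ) (k + 1)
        push_cast at this
        exact this
      push_cast at h
      field_simp at h
      have hk1 : ((k : ℂ) + 1) ≠ 0 := Nat.cast_add_one_ne_zero k
      exact mul_left_cancel₀ hk1 (show ((k : ℂ) + 1) * (y : BoundedContinuousFunction ℕ ℂ) (k+1)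
        = ((k : ℂ) + 1) * (y : BoundedContinuousFunction ℕ ℂ) 0 by linear_combination h)

/-- If the orbit `(Tⁿx)` of the Cesàro operator converges weakly, then
`x₀ = lim_k x_k`. -/
theorem weak_convergence_implies_first_eq_limit
    (T : convSeqs →L[ℂ] convSeqs) (hT : IsCesaro T) (x : convSeqs)
    (hweak : ∃ y : convSeqs, ∀ φ : convSeqs →L[ℂ] ℂ,
      Tendsto (fun n : ℕ => φ ((T ^ n) x)) atTop (nhds (φ y))) :
    Tendsto (fun k : ℕ => (x : BoundedContinuousFunction ℕ ℂ) k) atTop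
      (nhds ((x : BoundedContinuousFunction ℕ ℂ) 0)) := by
  obtain ⟨y, hy⟩ := hweak
  -- y is a fixed point of T
  have hfix : T y = y := by
    apply Subtype.ext
    apply BoundedContinuousFunction.ext
    intro k
    have h1 : Tendsto (fun n : ℕ => evCLM k (T ((T ^ n) x))) atTop (nhds (evCLM k (T y))) := by
      have := hy ((evCLM k).comp T)
      simpa using this
    have h2 : Tendsto (fun n : ℕ => evCLM k (T ((T ^ n) x))) atTop (nhds (evCLM k y)) := by
      have := (hy (evCLM k)).comp (tendsto_add_atTop_nat 1)
      refine this.congr fun n => ?_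
      simp [Function.comp, pow_succ']
    exact tendsto_nhds_unique h1 h2
  -- hence y is constant
  have hyc := cesaro_fixed_const hT y hfix
  -- π₀(Tⁿ x) = x₀ for all n
  have hev0 : ∀ n : ℕ, evCLM 0 ((T ^ n) x) = (x : BoundedContinuousFunction ℕ ℂ) 0 := by
    intro n
    induction n with
    | zero => rfl
    | succ n ihn =>
      rw [pow_succ']
      have := hT ((T ^ n) x) 0
      simp only [ContinuousLinearMap.mul_apply]
      rw [evCLM_apply, this]
      simp only [Nat.cast_zero, zero_add, inv_one, one_mul, Finset.range_one,
        Finset.sum_singleton]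
      exact ihn
  -- π_∞(Tⁿ x) = lim x for all n
  have hlim : ∀ n : ℕ, limCLM ((T ^ n) x) = seqLim x := by
    intro n
    induction n with
    | zero => rfl
    | succ n ihn =>
      rw [pow_succ']
      simp only [ContinuousLinearMap.mul_apply, limCLM_apply]
      rw [cesaro_lim hT]
      exact ihn
  -- y 0 = x 0
  have hy0 : (y : BoundedContinuousFunction ℕ ℂ) 0 = (x : BoundedContinuousFunction ℕ ℂ) 0 := by
    have := hy (evCLM 0)
    rw [tendsto_congr hev0] at this
    exact tendsto_nhds_unique this tendsto_const_nhds
  -- seqLim x = y 0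
  have hl : seqLim x = (y : BoundedContinuousFunction ℕ ℂ) 0 := by
    have h := hy limCLM
    rw [tendsto_congr hlim] at h
    have h2 : limCLM y = (y : BoundedContinuousFunction ℕ ℂ) 0 := by
      rw [limCLM_apply]
      refine seqLim_eq ?_
      rw [tendsto_congr hyc]
      exact tendsto_const_nhds
    rw [h2] at h
    exact tendsto_nhds_unique tendsto_const_nhds h
  have := seqLim_spec x
  rwa [hl, hy0] at this
end
end

section
/- Let T be the Cesàro operator on c and let P : c → c be defined by Px = x_0·(1,1,1,…). If x ∈ c satisfies x_0 = lim_{k→∞} x_k, then ‖Tⁿx − Px‖_∞ → 0 as n → ∞. -/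
open Filter Topology

noncomputable section

section CesaroAux
open Real Finset

-- derivative of partial-sum polynomial
lemma hasDerivAt_F (j m : ℕ) (v : ℝ) :
    HasDerivAt (fun v : ℝ => ∑ i ∈ Finset.range (m+1),
        (((j+i).choose j : ℝ) * v^(j+1) * (1-v)^i))
      (((j:ℝ)+m+1) * ((j+m).choose j) * v^j * (1-v)^m) v := by
  induction m with
  | zero =>
      simp only [Finset.range_one, Finset.sum_singleton, pow_zero, mul_one, add_zero,
        Nat.choose_self, Nat.cast_one, one_mul]
      have h := hasDerivAt_pow (j+1) v
      simpa [add_comm, mul_comm] using h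
  | succ m ih =>
      have hterm : HasDerivAt (fun v : ℝ => ((j+(m+1)).choose j : ℝ) * v^(j+1) * (1-v)^(m+1))
          ((((j+(m+1)).choose j : ℝ) * ((j+1) * v^j)) * (1-v)^(m+1)
            + (((j+(m+1)).choose j : ℝ) * v^(j+1)) * ((m+1) * (1-v)^m * (-1))) v := by
        have h1 : HasDerivAt (fun v : ℝ => ((j+(m+1)).choose j : ℝ) * v^(j+1))
            (((j+(m+1)).choose j : ℝ) * ((j+1) * v^j)) v := by
          simpa using (hasDerivAt_pow (j+1) v).const_mul (((j+(m+1)).choose j : ℝ))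
        have h2 : HasDerivAt (fun v : ℝ => (1-v)^(m+1)) ((m+1) * (1-v)^m * (-1)) v := by
          have := (hasDerivAt_pow (m+1) (1-v)).comp v ((hasDerivAt_id' v).const_sub 1)
          simpa [Function.comp_def] using this
        exact h1.mul h2
      have hsum := ih.add hterm
      have hkey : ((m:ℝ)+1) * ((j+(m+1)).choose j : ℝ) = ((j:ℝ)+m+1) * ((j+m).choose j : ℝ) := by
        have h := Nat.add_one_mul_choose_eq (j+m) m
        have e1 : (j+m).choose m = (j+m).choose j := by
          rw [← Nat.choose_symm (Nat.le_add_left m j)]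
          congr 1
          omega
        have e2 : (j+m+1).choose (m+1) = (j+(m+1)).choose j := by
          rw [← Nat.choose_symm (by omega : m+1 ≤ j+m+1)]
          rw [show j+(m+1) = j+m+1 from rfl]
          congr 1
          omega
        rw [e1, e2] at h
        have := congrArg (fun t : ℕ => (t : ℝ)) h
        push_cast at this ⊢
        linarith [this]
      have heq : ((j:ℝ)+((m:ℕ)+1:ℕ)+1) * (((j+(m+1)).choose j : ℕ):ℝ) * v^j * (1-v)^(m+1)
          = (((j:ℝ)+m+1) * (((j+m).choose j : ℕ):ℝ) * v^j * (1-v)^m +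
            ((((j+(m+1)).choose j :ℕ):ℝ) * (((j:ℝ)+1) * v^j) * (1-v)^(m+1)
              + (((j+(m+1)).choose j :ℕ):ℝ) * v^(j+1) * (((m:ℝ)+1) * (1-v)^m * (-1)))) := by
        push_cast at hkey ⊢
        linear_combination v^j*(1-v)^m * hkey
      have hfun : (fun x : ℝ => ∑ i ∈ Finset.range (m+1),
            (((j+i).choose j : ℝ) * x^(j+1) * (1-x)^i)
            + ((j+(m+1)).choose j : ℝ) * x^(j+1) * (1-x)^(m+1))
          = (fun x : ℝ => ∑ i ∈ Finset.range (m+1+1),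
            (((j+i).choose j : ℝ) * x^(j+1) * (1-x)^i)) := by
        funext x
        conv_rhs => rw [Finset.sum_range_succ]
      simp only [Pi.add_def] at hsum
      rw [hfun] at hsum
      exact heq ▸ hsum

lemma integral_poly (j m : ℕ) :
    ∫ v in (0:ℝ)..1, (((j:ℝ)+m+1) * ((j+m).choose j) * v^j * (1-v)^m) = 1 := by
  have hFTC := intervalIntegral.integral_eq_sub_of_hasDerivAt
    (f := fun v : ℝ => ∑ i ∈ Finset.range (m+1), (((j+i).choose j : ℝ) * v^(j+1) * (1-v)^i))
    (f' := fun v : ℝ => ((j:ℝ)+m+1) * ((j+m).choose j) * v^j * (1-v)^m)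
    (a := 0) (b := 1)
    (fun v _ => hasDerivAt_F j m v)
    (by apply Continuous.intervalIntegrable; continuity)
  rw [hFTC]
  have h1 : ∑ i ∈ Finset.range (m+1), (((j+i).choose j : ℝ) * (1:ℝ)^(j+1) * (1-(1:ℝ))^i) = 1 := by
    rw [Finset.sum_eq_single 0] <;> simp +contextual [Nat.pos_iff_ne_zero]
  have h0 : ∑ i ∈ Finset.range (m+1), (((j+i).choose j : ℝ) * (0:ℝ)^(j+1) * (1-(0:ℝ))^i) = 0 := by
    simp
  rw [h1, h0]
  norm_num

lemma integral_beta (j m : ℕ) :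
    ∫ v in (0:ℝ)..1, ((1-v)^m * v^j) = (((j:ℝ)+m+1) * ((j+m).choose j))⁻¹ := by
  have h := integral_poly j m
  have hcg : ∫ v in (0:ℝ)..1, ((((j:ℝ)+m+1) * ((j+m).choose j)) * ((1-v)^m * v^j))
      = ∫ v in (0:ℝ)..1, (((j:ℝ)+m+1) * ((j+m).choose j) * v^j * (1-v)^m) := by
    apply intervalIntegral.integral_congr
    intro v _
    ring
  have h2 := hcg.trans h
  rw [intervalIntegral.integral_const_mul] at h2
  exact (inv_eq_of_mul_eq_one_right h2).symm

lemma tendsto_pow_neg_log (a b : ℕ) (ha : 1 ≤ a) :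
    Tendsto (fun v : ℝ => v^a * (-Real.log v)^b) (nhdsWithin 0 (Set.Ioi 0)) (nhds 0) := by
  have h1 : Tendsto (fun v : ℝ => -Real.log v) (nhdsWithin 0 (Set.Ioi 0)) atTop := by
    exact tendsto_neg_atBot_atTop.comp Real.tendsto_log_nhdsGT_zero
  have h2 : Tendsto (fun w : ℝ => w^b * Real.exp (-((a:ℝ)*w))) atTop (nhds 0) := by
    have h3 : Tendsto (fun w : ℝ => (a:ℝ)*w) atTop atTop :=
      Tendsto.const_mul_atTop (by exact_mod_cast Nat.pos_of_ne_zero (by omega)) tendsto_id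
    have h4 := (tendsto_pow_mul_exp_neg_atTop_nhds_zero b).comp h3
    have h5 := h4.mul_const (((a:ℝ)^b)⁻¹)
    rw [zero_mul] at h5
    apply h5.congr
    intro w
    have hab : (a:ℝ)^b ≠ 0 := by positivity
    simp only [Function.comp_apply, mul_pow]
    field_simp [Function.comp, mul_pow]
  have := h2.comp h1
  apply Tendsto.congr' _ this
  filter_upwards [self_mem_nhdsWithin] with v hv
  have hv0 : (0:ℝ) < v := hv
  simp only [Function.comp]
  have hva : v ^ a = Real.exp (Real.log v * a) := by
    rw [← Real.rpow_natCast v a, Real.rpow_def_of_pos hv0]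
  rw [hva, show (-((a:ℝ) * -Real.log v)) = Real.log v * a by ring]
  ring

lemma contOn_pow_neg_log (a b : ℕ) (ha : 1 ≤ a) :
    ContinuousOn (fun v : ℝ => v^a * (-Real.log v)^b) (Set.Icc 0 1) := by
  intro v hv
  rcases eq_or_ne v 0 with rfl | hv0
  · -- continuity at 0
    have hval : (0:ℝ)^a * (-Real.log 0)^b = 0 := by
      simp [zero_pow (by omega : a ≠ 0)]
    rw [ContinuousWithinAt, hval]
    have hsub : Set.Icc (0:ℝ) 1 ⊆ {0} ∪ Set.Ioi 0 := by
      intro x hx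
      rcases eq_or_lt_of_le hx.1 with h | h
      · exact Or.inl (by simp [← h])
      · exact Or.inr h
    apply Tendsto.mono_left _ (nhdsWithin_mono 0 hsub)
    rw [nhdsWithin_union]
    apply Filter.Tendsto.sup
    · rw [nhdsWithin_singleton]
      rw [tendsto_pure_left]
      intro s hs
      simpa [zero_pow (by omega : a ≠ 0)] using mem_of_mem_nhds hs
    · exact tendsto_pow_neg_log a b ha
  · have : ContinuousAt (fun v : ℝ => v^a * (-Real.log v)^b) v :=
      ((continuous_pow a).continuousAt).mul (((Real.continuousAt_log hv0).neg).pow b)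
    exact this.continuousWithinAt

lemma exp_neg_mul_pow_le (n : ℕ) (w : ℝ) (hwnn : 0 ≤ w) :
    Real.exp (-w) * w^n ≤ ((n:ℝ)/Real.exp 1)^n := by
  rcases Nat.eq_zero_or_pos n with rfl | hn
  · simp only [pow_zero, mul_one]
    exact Real.exp_le_one_iff.mpr (by linarith)
  · rcases eq_or_lt_of_le hwnn with h | hwpos
    · rw [← h]
      simp only [zero_pow (by omega : n ≠ 0), mul_zero]
      positivity
    · have hn' : (0:ℝ) < n := by exact_mod_cast hn
      have hkey : (n:ℝ) * Real.log (w / n) ≤ w - n := by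
        have hl := Real.log_le_sub_one_of_pos (x := w / (n:ℝ)) (by positivity)
        calc (n:ℝ) * Real.log (w / n) ≤ (n:ℝ) * (w / n - 1) := by
              exact mul_le_mul_of_nonneg_left hl hn'.le
          _ = w - n := by field_simp
      have hlog : Real.log (w / n) = Real.log w - Real.log n := by
        exact Real.log_div (by positivity) (by positivity)
      have hLHS : Real.exp (-w) * w^n = Real.exp ((n:ℝ) * Real.log w - w) := by
        rw [Real.exp_sub, Real.exp_nat_mul, Real.exp_log hwpos]
        rw [Real.exp_neg]
        field_simp
      have hRHS : ((n:ℝ)/Real.exp 1)^n = Real.exp ((n:ℝ) * Real.log n - n) := by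
        rw [Real.exp_sub, Real.exp_nat_mul, Real.exp_log hn', div_pow, ← Real.exp_nat_mul]
        congr 1
        rw [mul_one]
      rw [hLHS, hRHS]
      apply Real.exp_le_exp.mpr
      rw [hlog] at hkey
      nlinarith

lemma mul_neg_log_pow_le (n : ℕ) (v : ℝ) (hv0 : 0 < v) (hv1 : v ≤ 1) :
    v * (-Real.log v)^n ≤ ((n:ℝ)/Real.exp 1)^n := by
  have hwnn : 0 ≤ -Real.log v := by
    simp only [neg_nonneg]
    exact Real.log_nonpos hv0.le hv1
  have h := exp_neg_mul_pow_le n (-Real.log v) hwnn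
  rwa [neg_neg, Real.exp_log hv0] at h

lemma key_step (j m n : ℕ) (hj : 1 ≤ j) :
    (∫ v in (0:ℝ)..1, ((∑ i ∈ Finset.range (m+1), (((j+i).choose j : ℝ) * (1-v)^i))
        * (v^j * (-Real.log v)^n) * ((n.factorial : ℝ))⁻¹))
    = ∫ v in (0:ℝ)..1, (((j:ℝ)+m+1) * ((j+m).choose j)
        * ((1-v)^m * (v^j * (-Real.log v)^(n+1))) * (((n+1).factorial : ℝ))⁻¹) := by
  set Sfun : ℝ → ℝ := fun v => ((∑ i ∈ Finset.range (m+1), (((j+i).choose j : ℝ) * (1-v)^i))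
        * (v^j * (-Real.log v)^n) * ((n.factorial : ℝ))⁻¹) with hSfun
  set Rfun : ℝ → ℝ := fun v => (((j:ℝ)+m+1) * ((j+m).choose j)
        * ((1-v)^m * (v^j * (-Real.log v)^(n+1))) * (((n+1).factorial : ℝ))⁻¹) with hRfun
  have contS : ContinuousOn Sfun (Set.Icc (0:ℝ) 1) := by
    apply ContinuousOn.mul _ continuousOn_const
    exact (Continuous.continuousOn (by continuity)).mul (contOn_pow_neg_log j n hj)
  have contR : ContinuousOn Rfun (Set.Icc (0:ℝ) 1) := by
    apply ContinuousOn.mul _ continuousOn_const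
    apply continuousOn_const.mul
    exact (Continuous.continuousOn (by continuity)).mul (contOn_pow_neg_log j (n+1) hj)
  set Φ : ℝ → ℝ := fun v => (∑ i ∈ Finset.range (m+1), (((j+i).choose j : ℝ) * v^(j+1) * (1-v)^i))
      * ((-Real.log v)^(n+1) * (((n+1).factorial : ℝ))⁻¹) with hΦ
  have contΦ : ContinuousOn Φ (Set.Icc (0:ℝ) 1) := by
    have contψ : ContinuousOn (fun v : ℝ => (∑ i ∈ Finset.range (m+1), (((j+i).choose j : ℝ) * (1-v)^i))
        * ((v^(j+1) * (-Real.log v)^(n+1)) * (((n+1).factorial : ℝ))⁻¹)) (Set.Icc (0:ℝ) 1) := by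
      exact (Continuous.continuousOn (by continuity)).mul
        ((contOn_pow_neg_log (j+1) (n+1) (by omega)).mul continuousOn_const)
    apply contψ.congr
    intro v _
    simp only [hΦ, Finset.sum_mul]
    apply Finset.sum_congr rfl
    intros
    ring
  have hderiv : ∀ v ∈ Set.Ioo (0:ℝ) 1, HasDerivAt Φ (Rfun v - Sfun v) v := by
    intro v hv
    have hvne : v ≠ 0 := ne_of_gt hv.1
    have hF := hasDerivAt_F j m v
    have hG : HasDerivAt (fun v : ℝ => (-Real.log v)^(n+1) * (((n+1).factorial : ℝ))⁻¹)
        ((((n:ℝ)+1) * (-Real.log v)^n * (-v⁻¹)) * (((n+1).factorial : ℝ))⁻¹) v := by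
      have := (((Real.hasDerivAt_log hvne).neg).pow (n+1)).mul_const (((n+1).factorial : ℝ))⁻¹
      simpa using this
    have hΦ' := hF.mul hG
    have heq : (((j:ℝ)+m+1) * ((j+m).choose j) * v^j * (1-v)^m)
          * ((-Real.log v)^(n+1) * (((n+1).factorial : ℝ))⁻¹)
        + (∑ i ∈ Finset.range (m+1), (((j+i).choose j : ℝ) * v^(j+1) * (1-v)^i))
          * ((((n:ℝ)+1) * (-Real.log v)^n * (-v⁻¹)) * (((n+1).factorial : ℝ))⁻¹)
        = Rfun v - Sfun v := by
      have hterm1 : (((j:ℝ)+m+1) * ((j+m).choose j) * v^j * (1-v)^m)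
          * ((-Real.log v)^(n+1) * (((n+1).factorial : ℝ))⁻¹) = Rfun v := by
        simp only [hRfun]; ring
      have hterm2 : (∑ i ∈ Finset.range (m+1), (((j+i).choose j : ℝ) * v^(j+1) * (1-v)^i))
          * ((((n:ℝ)+1) * (-Real.log v)^n * (-v⁻¹)) * (((n+1).factorial : ℝ))⁻¹) = - Sfun v := by
        simp only [hSfun, Finset.sum_mul, ← Finset.sum_neg_distrib]
        apply Finset.sum_congr rfl
        intro i _
        have hfact : (((n+1).factorial : ℝ)) = ((n:ℝ)+1) * (n.factorial : ℝ) := by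
          rw [Nat.factorial_succ]; push_cast; ring
        rw [hfact]
        have hnf : (n.factorial : ℝ) ≠ 0 := by positivity
        field_simp
        ring
      rw [hterm1, hterm2]
      ring
    exact heq ▸ hΦ'
  have hint : IntervalIntegrable (fun v => Rfun v - Sfun v) MeasureTheory.volume 0 1 := by
    apply ContinuousOn.intervalIntegrable
    rw [Set.uIcc_of_le (by norm_num : (0:ℝ) ≤ 1)]
    exact contR.sub contS
  have hFTC := intervalIntegral.integral_eq_sub_of_hasDeriv_right_of_le (by norm_num : (0:ℝ) ≤ 1)
    contΦ (fun v hv => (hderiv v hv).hasDerivWithinAt) hint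
  have hΦ1 : Φ 1 = 0 := by simp [hΦ]
  have hΦ0 : Φ 0 = 0 := by
    simp [hΦ, zero_pow (by omega : j+1 ≠ 0)]
  rw [hΦ1, hΦ0, sub_zero] at hFTC
  have hintR : IntervalIntegrable Rfun MeasureTheory.volume 0 1 := by
    apply ContinuousOn.intervalIntegrable
    rw [Set.uIcc_of_le (by norm_num : (0:ℝ) ≤ 1)]
    exact contR
  have hintS : IntervalIntegrable Sfun MeasureTheory.volume 0 1 := by
    apply ContinuousOn.intervalIntegrable
    rw [Set.uIcc_of_le (by norm_num : (0:ℝ) ≤ 1)]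
    exact contS
  rw [intervalIntegral.integral_sub hintR hintS] at hFTC
  linarith [hFTC]

/-- Matrix entries of powers of the Cesàro operator, defined by first-step recursion. -/
noncomputable def cesA : ℕ → ℕ → ℕ → ℝ
  | 0 => fun k j => if k = j then 1 else 0
  | n+1 => fun k j => ((k:ℝ)+1)⁻¹ * ∑ i ∈ Finset.range (k+1), cesA n i j

lemma cesA_zero (k j : ℕ) : cesA 0 k j = if k = j then 1 else 0 := rfl

lemma cesA_succ (n k j : ℕ) :
    cesA (n+1) k j = ((k:ℝ)+1)⁻¹ * ∑ i ∈ Finset.range (k+1), cesA n i j := rfl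

lemma cesA_zero_of_lt : ∀ n k j, k < j → cesA n k j = 0 := by
  intro n
  induction n with
  | zero => intro k j h; simp [cesA_zero, Nat.ne_of_lt h]
  | succ n ih =>
      intro k j h
      rw [cesA_succ]
      rw [Finset.sum_eq_zero, mul_zero]
      intro i hi
      exact ih i j (lt_of_le_of_lt (by simpa [Nat.lt_succ_iff] using hi) h)

lemma cesA_nonneg : ∀ n k j, 0 ≤ cesA n k j := by
  intro n
  induction n with
  | zero => intro k j; rw [cesA_zero]; split <;> norm_num
  | succ n ih =>
      intro k j
      rw [cesA_succ]
      apply mul_nonneg (by positivity)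
      exact Finset.sum_nonneg fun i _ => ih i j

lemma cesA_eq (j : ℕ) (hj : 1 ≤ j) : ∀ n m, cesA (n+1) (j+m) j
    = ((j+m).choose j : ℝ) * ∫ v in (0:ℝ)..1, ((1-v)^m * (v^j * (-Real.log v)^n)) * ((n.factorial:ℝ))⁻¹ := by
  intro n
  induction n with
  | zero =>
      intro m
      rw [cesA_succ]
      have hsum : ∑ i ∈ Finset.range (j+m+1), cesA 0 i j = 1 := by
        simp only [cesA_zero]
        rw [Finset.sum_ite_eq' (Finset.range (j+m+1)) j (fun _ => (1:ℝ))]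
        simp [Nat.lt_succ_iff]
      rw [hsum, mul_one]
      have hsimp : (∫ v in (0:ℝ)..1, ((1-v)^m * (v^j * (-Real.log v)^0)) * ((Nat.factorial 0:ℝ))⁻¹)
          = ∫ v in (0:ℝ)..1, ((1-v)^m * v^j) := by
        apply intervalIntegral.integral_congr
        intro v _
        simp
      rw [hsimp, integral_beta j m]
      have hC : (0:ℝ) < ((j+m).choose j : ℝ) := by
        exact_mod_cast Nat.choose_pos (Nat.le_add_right j m)
      push_cast
      field_simp
  | succ n ih =>
      intro m
      rw [cesA_succ]
      have hzero : ∑ i ∈ Finset.Ico 0 j, cesA (n+1) i j = 0 :=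
        Finset.sum_eq_zero fun i hi => cesA_zero_of_lt _ _ _ (by simpa using (Finset.mem_Ico.mp hi).2)
      have hsplit : ∑ i ∈ Finset.range (j+m+1), cesA (n+1) i j
          = ∑ i ∈ Finset.range (m+1), cesA (n+1) (j+i) j := by
        rw [Finset.range_eq_Ico, ← Finset.sum_Ico_consecutive _ (Nat.zero_le j) (by omega : j ≤ j+m+1),
          hzero, zero_add, Finset.sum_Ico_eq_sum_range]
        rw [show j+m+1-j = m+1 by omega, Finset.range_eq_Ico]
      rw [hsplit]
      have hterm : ∀ i, cesA (n+1) (j+i) j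
          = ∫ v in (0:ℝ)..1, (((j+i).choose j : ℝ) * (((1-v)^i * (v^j * (-Real.log v)^n)) * ((n.factorial:ℝ))⁻¹)) := by
        intro i
        rw [ih i, ← intervalIntegral.integral_const_mul]
      have hint : ∀ i ∈ Finset.range (m+1), IntervalIntegrable
          (fun v : ℝ => (((j+i).choose j : ℝ) * (((1-v)^i * (v^j * (-Real.log v)^n)) * ((n.factorial:ℝ))⁻¹)))
          MeasureTheory.volume 0 1 := by
        intro i _
        apply ContinuousOn.intervalIntegrable
        rw [Set.uIcc_of_le (by norm_num : (0:ℝ) ≤ 1)]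
        apply continuousOn_const.mul
        exact ((Continuous.continuousOn (by continuity)).mul (contOn_pow_neg_log j n hj)).mul continuousOn_const
      rw [show (∑ i ∈ Finset.range (m+1), cesA (n+1) (j+i) j)
          = ∑ i ∈ Finset.range (m+1), ∫ v in (0:ℝ)..1,
            (((j+i).choose j : ℝ) * (((1-v)^i * (v^j * (-Real.log v)^n)) * ((n.factorial:ℝ))⁻¹))
        from Finset.sum_congr rfl fun i _ => hterm i]
      rw [← intervalIntegral.integral_finset_sum hint]
      have hcongr : (∫ v in (0:ℝ)..1, ∑ i ∈ Finset.range (m+1),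
            (((j+i).choose j : ℝ) * (((1-v)^i * (v^j * (-Real.log v)^n)) * ((n.factorial:ℝ))⁻¹)))
          = ∫ v in (0:ℝ)..1, ((∑ i ∈ Finset.range (m+1), (((j+i).choose j : ℝ) * (1-v)^i))
            * (v^j * (-Real.log v)^n) * ((n.factorial:ℝ))⁻¹) := by
        apply intervalIntegral.integral_congr
        intro v _
        simp only [Finset.sum_mul]
        apply Finset.sum_congr rfl
        intros
        ring
      rw [hcongr, key_step j m n hj]
      have hpull : (∫ v in (0:ℝ)..1, (((j:ℝ)+m+1) * ((j+m).choose j)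
            * ((1-v)^m * (v^j * (-Real.log v)^(n+1))) * (((n+1).factorial : ℝ))⁻¹))
          = (((j:ℝ)+m+1) * ((j+m).choose j)) * ∫ v in (0:ℝ)..1,
            (((1-v)^m * (v^j * (-Real.log v)^(n+1))) * (((n+1).factorial : ℝ))⁻¹) := by
        rw [← intervalIntegral.integral_const_mul]
        apply intervalIntegral.integral_congr
        intro v _
        ring
      rw [hpull]
      have hne : ((j:ℝ)+(m:ℝ)+1) ≠ 0 := by positivity
      push_cast
      field_simp

/-- the bound sequence `Mseq n = (n/e)^n / n!`, which tends to `0` by Stirling. -/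
noncomputable def Mseq (n : ℕ) : ℝ := ((n:ℝ)/Real.exp 1)^n * ((n.factorial:ℝ))⁻¹

lemma Mseq_nonneg (n : ℕ) : 0 ≤ Mseq n := by
  unfold Mseq; positivity

lemma cesA_le_Mseq (j m n : ℕ) (hj : 1 ≤ j) : cesA (n+1) (j+m) j ≤ Mseq n := by
  obtain ⟨j', rfl⟩ : ∃ j', j = j'+1 := ⟨j-1, by omega⟩
  rw [cesA_eq _ hj n m]
  have hMn : (0:ℝ) ≤ ((n:ℝ)/Real.exp 1)^n := by positivity
  have hmono : (∫ v in (0:ℝ)..1, ((1-v)^m * (v^(j'+1) * (-Real.log v)^n)) * ((n.factorial:ℝ))⁻¹)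
      ≤ ∫ v in (0:ℝ)..1, ((1-v)^m * v^(j')) * (((n:ℝ)/Real.exp 1)^n * ((n.factorial:ℝ))⁻¹) := by
    apply intervalIntegral.integral_mono_on (by norm_num : (0:ℝ) ≤ 1)
    · apply ContinuousOn.intervalIntegrable
      rw [Set.uIcc_of_le (by norm_num : (0:ℝ) ≤ 1)]
      exact ((Continuous.continuousOn (by continuity)).mul
        (contOn_pow_neg_log (j'+1) n (by omega))).mul continuousOn_const
    · apply Continuous.intervalIntegrable
      continuity
    · intro v hv
      rcases eq_or_lt_of_le hv.1 with h0 | h0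
      · rw [← h0]
        have h1 : ((1-(0:ℝ))^m * ((0:ℝ)^(j'+1) * (-Real.log 0)^n)) * ((n.factorial:ℝ))⁻¹ = 0 := by
          simp
        rw [h1]
        positivity
      · have hb := mul_neg_log_pow_le n v h0 hv.2
        have hnn : (0:ℝ) ≤ (1-v)^m * v^(j') * ((n.factorial:ℝ))⁻¹ := by
          have : (0:ℝ) ≤ 1 - v := by linarith [hv.2]
          positivity
        calc ((1-v)^m * (v^(j'+1) * (-Real.log v)^n)) * ((n.factorial:ℝ))⁻¹
            = ((1-v)^m * v^(j') * ((n.factorial:ℝ))⁻¹) * (v * (-Real.log v)^n) := by ring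
          _ ≤ ((1-v)^m * v^(j') * ((n.factorial:ℝ))⁻¹) * (((n:ℝ)/Real.exp 1)^n) :=
              mul_le_mul_of_nonneg_left hb hnn
          _ = ((1-v)^m * v^(j')) * (((n:ℝ)/Real.exp 1)^n * ((n.factorial:ℝ))⁻¹) := by ring
  have hbeta : (∫ v in (0:ℝ)..1, ((1-v)^m * v^(j')) * (((n:ℝ)/Real.exp 1)^n * ((n.factorial:ℝ))⁻¹))
      = (((j':ℝ)+m+1) * ((j'+m).choose j'))⁻¹ * Mseq n := by
    rw [intervalIntegral.integral_mul_const, integral_beta j' m, Mseq]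
  have hCpos : (0:ℝ) < ((j'+1+m).choose (j'+1) : ℝ) := by
    exact_mod_cast Nat.choose_pos (by omega)
  have hcast : ((j'+1+m).choose (j'+1) : ℝ) * ((j':ℝ)+1) = (((j':ℝ)+m+1) * ((j'+m).choose j')) := by
    have h := Nat.add_one_mul_choose_eq (j'+m) j'
    rw [show j'+1+m = j'+m+1 by omega]
    exact_mod_cast (congrArg (fun t : ℕ => (t:ℝ)) h).symm
  calc ((j'+1+m).choose (j'+1) : ℝ) * ∫ v in (0:ℝ)..1,
        ((1-v)^m * (v^(j'+1) * (-Real.log v)^n)) * ((n.factorial:ℝ))⁻¹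
      ≤ ((j'+1+m).choose (j'+1) : ℝ) * ((((j':ℝ)+m+1) * ((j'+m).choose j'))⁻¹ * Mseq n) := by
        apply mul_le_mul_of_nonneg_left _ hCpos.le
        rw [← hbeta]
        exact hmono
    _ ≤ Mseq n := by
        have hpos : (0:ℝ) < (((j':ℝ)+m+1) * ((j'+m).choose j')) := by
          have : (0:ℝ) < ((j'+m).choose j' : ℝ) := by
            exact_mod_cast Nat.choose_pos (by omega)
          positivity
        have hfrac : ((j'+1+m).choose (j'+1) : ℝ) * (((j':ℝ)+m+1) * ((j'+m).choose j'))⁻¹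
            = ((j':ℝ)+1)⁻¹ := by
          rw [← hcast]
          field_simp
        calc ((j'+1+m).choose (j'+1) : ℝ) * ((((j':ℝ)+m+1) * ((j'+m).choose j'))⁻¹ * Mseq n)
            = (((j'+1+m).choose (j'+1) : ℝ) * (((j':ℝ)+m+1) * ((j'+m).choose j'))⁻¹) * Mseq n := by
              ring
          _ = ((j':ℝ)+1)⁻¹ * Mseq n := by rw [hfrac]
          _ ≤ 1 * Mseq n := by
              apply mul_le_mul_of_nonneg_right _ (Mseq_nonneg n)
              rw [inv_le_one_iff₀]
              right; linarith [Nat.cast_nonneg (α := ℝ) j']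
          _ = Mseq n := one_mul _

lemma Mseq_tendsto : Tendsto Mseq atTop (nhds 0) := by
  have hpos : (0:ℝ) < Real.sqrt π := by
    rw [Real.sqrt_pos]; exact Real.pi_pos
  have h2n : Tendsto (fun n : ℕ => 2*(n:ℝ)) atTop atTop :=
    Filter.Tendsto.const_mul_atTop (by norm_num) tendsto_natCast_atTop_atTop
  have hsqrt : Tendsto (fun n : ℕ => Real.sqrt (2*(n:ℝ))) atTop atTop := by
    have h1 : Tendsto (fun x:ℝ => x ^ ((1:ℝ)/2)) atTop atTop := tendsto_rpow_atTop (by norm_num)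
    apply (h1.comp h2n).congr
    intro n
    simp [Function.comp, Real.sqrt_eq_rpow]
  have hden : Tendsto (fun n : ℕ => Real.sqrt (2*(n:ℝ)) * Stirling.stirlingSeq n) atTop atTop :=
    hsqrt.atTop_mul_pos hpos Stirling.tendsto_stirlingSeq_sqrt_pi
  have h0 := hden.inv_tendsto_atTop
  refine Filter.Tendsto.congr' ?_ h0
  filter_upwards [eventually_ge_atTop 1] with n hn
  have hnpos : (0:ℝ) < n := by exact_mod_cast hn
  have hfact : (0:ℝ) < (n.factorial : ℝ) := by exact_mod_cast n.factorial_pos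
  have hpow : (0:ℝ) < ((n:ℝ)/Real.exp 1)^n := by positivity
  have hsq : (0:ℝ) < Real.sqrt (2*(n:ℝ)) := Real.sqrt_pos.mpr (by positivity)
  simp only [Pi.inv_apply]
  rw [Stirling.stirlingSeq, Mseq]
  rw [eq_comm]
  field_simp

end CesaroAux

/-- If `x ∈ c` satisfies `x₀ = lim_k x_k`, then `‖Tⁿx − Px‖_∞ → 0`, where
`Px` is the constant sequence with value `x₀`. -/
theorem orbit_tendsto_of_first_eq_limit
    (T : convSeqs →L[ℂ] convSeqs) (hT : IsCesaro T) (x p : convSeqs)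
    (hp : ∀ k : ℕ, (p : BoundedContinuousFunction ℕ ℂ) k
      = (x : BoundedContinuousFunction ℕ ℂ) 0)
    (hx : Tendsto (fun k : ℕ => (x : BoundedContinuousFunction ℕ ℂ) k) atTop
      (nhds ((x : BoundedContinuousFunction ℕ ℂ) 0))) :
    Tendsto (fun n : ℕ => ‖(T ^ n) x - p‖) atTop (nhds 0) := by
  classical
  have hTp : T p = p := by
    apply Subtype.ext
    apply BoundedContinuousFunction.ext
    intro k
    rw [hT p k]
    simp only [hp]
    rw [Finset.sum_const, Finset.card_range]
    have hne : ((k:ℂ)+1) ≠ 0 := Nat.cast_add_one_ne_zero k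
    rw [nsmul_eq_mul]
    push_cast
    field_simp
  have hTnp : ∀ n, (T ^ n) p = p := by
    intro n
    induction n with
    | zero => simp
    | succ n ih => rw [pow_succ, ContinuousLinearMap.mul_apply, hTp, ih]
  set y : convSeqs := x - p with hy
  have hyx : ∀ n : ℕ, (T ^ n) x - p = (T ^ n) y := by
    intro n
    rw [hy, map_sub, hTnp n]
  have hycoord : ∀ k : ℕ, (y : BoundedContinuousFunction ℕ ℂ) k
      = (x : BoundedContinuousFunction ℕ ℂ) k - (x : BoundedContinuousFunction ℕ ℂ) 0 := by
    intro k
    rw [hy]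
    rw [show ((x - p : convSeqs) : BoundedContinuousFunction ℕ ℂ)
      = (x : BoundedContinuousFunction ℕ ℂ) - (p : BoundedContinuousFunction ℕ ℂ) from rfl]
    rw [BoundedContinuousFunction.sub_apply, hp k]
  have hy0 : (y : BoundedContinuousFunction ℕ ℂ) 0 = 0 := by
    rw [hycoord 0, sub_self]
  rw [Metric.tendsto_atTop]
  intro ε hε
  -- tail bound
  have hylim : Tendsto (fun k : ℕ => (y : BoundedContinuousFunction ℕ ℂ) k) atTop (nhds 0) := by
    have h1 : Tendsto (fun k : ℕ => (x : BoundedContinuousFunction ℕ ℂ) k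
        - (x : BoundedContinuousFunction ℕ ℂ) 0) atTop (nhds 0) := by
      simpa using hx.sub_const ((x : BoundedContinuousFunction ℕ ℂ) 0)
    apply h1.congr
    intro k
    rw [hycoord k]
  obtain ⟨N, hN⟩ : ∃ N : ℕ, ∀ k ≥ N, ‖(y : BoundedContinuousFunction ℕ ℂ) k‖ ≤ ε/3 := by
    obtain ⟨N, hN⟩ := Metric.tendsto_atTop.mp hylim (ε/3) (by positivity)
    exact ⟨N, fun k hk => by
      have := hN k hk
      rw [dist_zero_right] at this
      exact this.le⟩
  set S : ℝ := ∑ j ∈ Finset.range N, ‖(y : BoundedContinuousFunction ℕ ℂ) j‖ with hS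
  have hSnn : 0 ≤ S := Finset.sum_nonneg fun j _ => norm_nonneg _
  -- key pointwise estimate
  have key : ∀ n k, ‖(((T ^ n) y : convSeqs) : BoundedContinuousFunction ℕ ℂ) k‖
      ≤ (∑ j ∈ Finset.range N, ‖(y : BoundedContinuousFunction ℕ ℂ) j‖ * cesA n k j) + ε/3 := by
    intro n
    induction n with
    | zero =>
        intro k
        rw [pow_zero, ContinuousLinearMap.one_apply]
        by_cases hk : k < N
        · have hsum : ∑ j ∈ Finset.range N,
              ‖(y : BoundedContinuousFunction ℕ ℂ) j‖ * cesA 0 k j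
              = ‖(y : BoundedContinuousFunction ℕ ℂ) k‖ := by
            simp only [cesA_zero]
            rw [Finset.sum_eq_single k]
            · simp
            · intro b _ hbk
              simp [Ne.symm hbk]
            · intro hk'
              exact absurd (Finset.mem_range.mpr hk) hk'
          rw [hsum]
          linarith
        · have h1 : ‖(y : BoundedContinuousFunction ℕ ℂ) k‖ ≤ ε/3 := hN k (by omega)
          have h2 : 0 ≤ ∑ j ∈ Finset.range N,
              ‖(y : BoundedContinuousFunction ℕ ℂ) j‖ * cesA 0 k j :=
            Finset.sum_nonneg fun j _ => mul_nonneg (norm_nonneg _) (cesA_nonneg 0 k j)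
          linarith
    | succ n ih =>
        intro k
        rw [pow_succ', ContinuousLinearMap.mul_apply]
        rw [hT ((T ^ n) y) k]
        have hnormc : ‖((k:ℂ)+1)⁻¹‖ = ((k:ℝ)+1)⁻¹ := by
          rw [norm_inv]
          congr 1
          rw [show ((k:ℂ)+1) = ((k+1:ℕ):ℂ) by push_cast; ring]
          rw [Complex.norm_natCast]
          push_cast
          ring
        have hkinv : (0:ℝ) ≤ ((k:ℝ)+1)⁻¹ := by positivity
        calc ‖((k:ℂ)+1)⁻¹ * ∑ i ∈ Finset.range (k+1),
              (((T ^ n) y : convSeqs) : BoundedContinuousFunction ℕ ℂ) i‖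
            ≤ ((k:ℝ)+1)⁻¹ * ∑ i ∈ Finset.range (k+1),
              ‖(((T ^ n) y : convSeqs) : BoundedContinuousFunction ℕ ℂ) i‖ := by
              rw [norm_mul, hnormc]
              exact mul_le_mul_of_nonneg_left (norm_sum_le _ _) hkinv
          _ ≤ ((k:ℝ)+1)⁻¹ * ∑ i ∈ Finset.range (k+1),
              ((∑ j ∈ Finset.range N, ‖(y : BoundedContinuousFunction ℕ ℂ) j‖ * cesA n i j) + ε/3) := by
              apply mul_le_mul_of_nonneg_left _ hkinv
              exact Finset.sum_le_sum fun i _ => ih i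
          _ = (∑ j ∈ Finset.range N, ‖(y : BoundedContinuousFunction ℕ ℂ) j‖ * cesA (n+1) k j) + ε/3 := by
              rw [Finset.sum_add_distrib, Finset.sum_const, Finset.card_range, Finset.sum_comm]
              have hkne : ((k:ℝ)+1) ≠ 0 := by positivity
              rw [nsmul_eq_mul, mul_add, Finset.mul_sum]
              congr 1
              · apply Finset.sum_congr rfl
                intro j _
                rw [cesA_succ, Finset.mul_sum]
                rw [Finset.mul_sum]
                ring_nf
                rw [Finset.mul_sum]
                apply Finset.sum_congr rfl
                intros
                ring
              · push_cast
                field_simp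
  -- choose n₀
  obtain ⟨n₀, hn₀⟩ : ∃ n₀ : ℕ, ∀ n ≥ n₀, S * Mseq n < ε/3 := by
    have h1 : Tendsto (fun n => S * Mseq n) atTop (nhds 0) := by
      simpa using Mseq_tendsto.const_mul S
    obtain ⟨n₀, h⟩ := Metric.tendsto_atTop.mp h1 (ε/3) (by positivity)
    refine ⟨n₀, fun n hn => ?_⟩
    have := h n hn
    rw [Real.dist_eq, sub_zero] at this
    exact lt_of_le_of_lt (le_abs_self _) this
  refine ⟨n₀ + 1, fun n hn => ?_⟩
  obtain ⟨n', rfl⟩ : ∃ n', n = n' + 1 := ⟨n - 1, by omega⟩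
  have hn' : n' ≥ n₀ := by omega
  have hnorm : ‖(T ^ (n'+1)) y‖ ≤ S * Mseq n' + ε/3 := by
    rw [Submodule.coe_norm]
    apply (BoundedContinuousFunction.norm_le
      (add_nonneg (mul_nonneg hSnn (Mseq_nonneg n')) (by linarith))).mpr
    intro k
    have h1 := key (n'+1) k
    have h2 : (∑ j ∈ Finset.range N, ‖(y : BoundedContinuousFunction ℕ ℂ) j‖ * cesA (n'+1) k j)
        ≤ S * Mseq n' := by
      rw [hS, Finset.sum_mul]
      apply Finset.sum_le_sum
      intro j _
      rcases Nat.eq_zero_or_pos j with rfl | hj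
      · rw [hy0]
        simp
      · rcases le_or_gt j k with hjk | hjk
        · obtain ⟨m, rfl⟩ : ∃ m, k = j + m := ⟨k - j, by omega⟩
          exact mul_le_mul_of_nonneg_left (cesA_le_Mseq j m n' hj) (norm_nonneg _)
        · rw [cesA_zero_of_lt _ _ _ hjk, mul_zero]
          exact mul_nonneg (norm_nonneg _) (Mseq_nonneg _)
    linarith
  rw [hyx (n'+1)]
  rw [Real.dist_eq, sub_zero, abs_of_nonneg (norm_nonneg _)]
  have := hn₀ n' hn'
  linarith
end
end

section
/- Let T be the Cesàro operator on c, P the projection Px = x_0·(1,1,1,…). If x ∈ c satisfies x_0 = lim_{k→∞} x_k and the series ∑_{k=1}^∞ (x_k − x_0)/k converges, then ‖Tⁿx − Px‖_∞ = O(n^{−1/2}) as n → ∞. -/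
open Filter Topology

noncomputable section

/- aux -/
namespace CesAux

open Finset MeasureTheory Set

/-- Discrete kernel of the `n`-th power of the Cesàro operator. -/
def cesKer (n k j : ℕ) : ℝ :=
  (k.choose j : ℝ) * ∑ i ∈ Finset.range (k - j + 1),
    ((k - j).choose i : ℝ) * (-1) ^ i / ((j + i + 1 : ℕ) : ℝ) ^ n

lemma baseSum (b : ℕ) : ∀ a : ℕ,
    ∑ i ∈ Finset.range (b + 1), (b.choose i : ℝ) * (-1) ^ i / ((a + i + 1 : ℕ) : ℝ)
      = (b.factorial : ℝ) * a.factorial / (a + b + 1).factorial := by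
  induction b with
  | zero =>
    intro a
    rw [Finset.sum_range_one]
    have h1 : ((a + 0 + 1).factorial : ℝ) = (a + 1) * a.factorial := by
      rw [Nat.add_zero, Nat.factorial_succ]; push_cast; ring
    rw [h1]
    have ha : ((a : ℝ) + 1) ≠ 0 := by positivity
    have ha' : (a.factorial : ℝ) ≠ 0 := by positivity
    push_cast
    field_simp
    simp
  | succ b ih =>
    intro a
    have pascal : ∀ i : ℕ, ((b+1).choose (i+1) : ℝ) = b.choose (i+1) + b.choose i := by
      intro i
      rw [Nat.choose_succ_succ']
      push_cast; ring
    rw [Finset.sum_range_succ']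
    have split : ∑ i ∈ Finset.range (b + 1),
        ((b+1).choose (i+1) : ℝ) * (-1) ^ (i+1) / ((a + (i+1) + 1 : ℕ) : ℝ)
        = (∑ i ∈ Finset.range (b + 1),
            (b.choose (i+1) : ℝ) * (-1) ^ (i+1) / ((a + (i+1) + 1 : ℕ) : ℝ))
          - ∑ i ∈ Finset.range (b + 1),
            (b.choose i : ℝ) * (-1) ^ i / (((a+1) + i + 1 : ℕ) : ℝ) := by
      rw [← Finset.sum_sub_distrib]
      refine Finset.sum_congr rfl fun i _ => ?_
      rw [pascal i]
      have : (a + (i+1) + 1 : ℕ) = ((a+1) + i + 1 : ℕ) := by omega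
      rw [this]
      push_cast
      ring
    rw [split]
    -- first sum: complete to full alternating sum for b, a
    have compl : ∑ i ∈ Finset.range (b + 1),
        (b.choose (i+1) : ℝ) * (-1) ^ (i+1) / ((a + (i+1) + 1 : ℕ) : ℝ)
        = (∑ i ∈ Finset.range (b + 1),
            (b.choose i : ℝ) * (-1) ^ i / ((a + i + 1 : ℕ) : ℝ))
          - (b.choose 0 : ℝ) * (-1) ^ (0:ℕ) / ((a + 0 + 1 : ℕ) : ℝ) := by
      have h := Finset.sum_range_succ' (fun i => (b.choose i : ℝ) * (-1) ^ i / ((a + i + 1 : ℕ) : ℝ)) b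
      -- h : ∑_{i ∈ range (b+1)} f i = ∑_{i ∈ range b} f (i+1) + f 0
      have h2 : ∑ i ∈ Finset.range (b + 1),
          (b.choose (i+1) : ℝ) * (-1) ^ (i+1) / ((a + (i+1) + 1 : ℕ) : ℝ)
          = ∑ i ∈ Finset.range b,
            (b.choose (i+1) : ℝ) * (-1) ^ (i+1) / ((a + (i+1) + 1 : ℕ) : ℝ) := by
        rw [Finset.sum_range_succ]
        simp
      rw [h2, h]
      ring
    rw [compl, ih a, ih (a+1)]
    have e0 : ((b:ℕ).choose 0 : ℝ) * (-1) ^ (0:ℕ) / ((a + 0 + 1 : ℕ) : ℝ) = ((a:ℝ)+1)⁻¹ := by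
      simp
    rw [e0]
    have hfac1 : ((a + (b+1) + 1).factorial : ℝ)
        = ((a:ℝ) + b + 2) * (a + b + 1).factorial := by
      have : (a + (b+1) + 1) = (a + b + 1) + 1 := by omega
      rw [this, Nat.factorial_succ]; push_cast; ring
    have hfac2 : (((a+1) + b + 1).factorial : ℝ)
        = ((a:ℝ) + b + 2) * (a + b + 1).factorial := by
      have : ((a+1) + b + 1) = (a + b + 1) + 1 := by omega
      rw [this, Nat.factorial_succ]; push_cast; ring
    have hfac3 : ((a+1).factorial : ℝ) = ((a:ℝ) + 1) * a.factorial := by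
      rw [Nat.factorial_succ]; push_cast; ring
    have hfac4 : (((b:ℕ)+1).factorial : ℝ) = ((b:ℝ) + 1) * b.factorial := by
      rw [Nat.factorial_succ]; push_cast; ring
    rw [hfac1, hfac2, hfac3, hfac4]
    have h1 : ((a:ℝ) + 1) ≠ 0 := by positivity
    have h2 : ((a:ℝ) + b + 2) ≠ 0 := by positivity
    have h3 : ((a + b + 1).factorial : ℝ) ≠ 0 := by positivity
    have h4 : (a.factorial : ℝ) ≠ 0 := by positivity
    simp only [Nat.choose_zero_right, pow_zero, Nat.cast_one]
    field_simp
    push_cast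
    ring

lemma cesKer_one {k j : ℕ} (hj : j ≤ k) : cesKer 1 k j = ((k : ℝ) + 1)⁻¹ := by
  unfold cesKer
  have : ∑ i ∈ Finset.range (k - j + 1),
      ((k - j).choose i : ℝ) * (-1) ^ i / ((j + i + 1 : ℕ) : ℝ) ^ 1
      = ∑ i ∈ Finset.range (k - j + 1),
        ((k - j).choose i : ℝ) * (-1) ^ i / ((j + i + 1 : ℕ) : ℝ) := by
    refine Finset.sum_congr rfl fun i _ => by rw [pow_one]
  rw [this, baseSum (k - j) j]
  have hk : j + (k - j) + 1 = k + 1 := by omega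
  rw [hk]
  have hchoose : (k.choose j : ℝ) = (k.factorial : ℝ) / (j.factorial * (k - j).factorial) := by
    rw [Nat.cast_choose ℝ hj]
  rw [hchoose]
  have hfac : ((k + 1).factorial : ℝ) = ((k:ℝ) + 1) * k.factorial := by
    rw [Nat.factorial_succ]; push_cast; ring
  rw [hfac]
  have h1 : (j.factorial : ℝ) ≠ 0 := by positivity
  have h2 : ((k - j).factorial : ℝ) ≠ 0 := by positivity
  have h3 : (k.factorial : ℝ) ≠ 0 := by positivity
  have h4 : ((k:ℝ) + 1) ≠ 0 := by positivity
  field_simp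

lemma natKey {k j m : ℕ} (hj : j ≤ k) (hm : m ≤ k - j) :
    (j + m + 1) * ((j + m).choose j * (k + 1).choose (j + m + 1))
      = (k + 1) * (k.choose j * (k - j).choose m) := by
  have h1 : (k + 1) * k.choose (j + m) = (k + 1).choose (j + m + 1) * (j + m + 1) :=
    Nat.add_one_mul_choose_eq k (j + m)
  have h2 : k.choose (j + m) * (j + m).choose j = k.choose j * (k - j).choose m := by
    have := Nat.choose_mul (n := k) (k := j + m) (s := j) (by omega)
    simpa [Nat.add_sub_cancel_left] using this
  calc (j + m + 1) * ((j + m).choose j * (k + 1).choose (j + m + 1))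
      = ((k + 1).choose (j + m + 1) * (j + m + 1)) * (j + m).choose j := by ring
    _ = ((k + 1) * k.choose (j + m)) * (j + m).choose j := by rw [h1]
    _ = (k + 1) * (k.choose (j + m) * (j + m).choose j) := by ring
    _ = (k + 1) * (k.choose j * (k - j).choose m) := by rw [h2]

lemma cesKer_rec {k j : ℕ} (hj : j ≤ k) (n : ℕ) :
    cesKer (n + 1) k j = ((k : ℝ) + 1)⁻¹ * ∑ i ∈ Finset.Icc j k, cesKer n i j := by
  set N := k - j with hN
  -- Step 1 : reindex the Icc sum
  have step1 : ∑ i ∈ Finset.Icc j k, cesKer n i j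
      = ∑ d ∈ Finset.range (N + 1), cesKer n (j + d) j := by
    rw [← Finset.Ico_add_one_right_eq_Icc, Finset.sum_Ico_eq_sum_range]
    have : k + 1 - j = N + 1 := by omega
    rw [this]
  -- Step 2 : expand cesKer n (j+d) j
  have step2 : ∀ d, cesKer n (j + d) j
      = ∑ m ∈ Finset.range (d + 1),
        ((j + d).choose j * d.choose m : ℝ) * (-1) ^ m / ((j + m + 1 : ℕ) : ℝ) ^ n := by
    intro d
    unfold cesKer
    rw [Nat.add_sub_cancel_left, Finset.mul_sum]
    refine Finset.sum_congr rfl fun m _ => ?_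
    push_cast
    ring
  -- Step 3 : swap the double sum
  have step3 : ∑ d ∈ Finset.range (N + 1), ∑ m ∈ Finset.range (d + 1),
        ((j + d).choose j * d.choose m : ℝ) * (-1) ^ m / ((j + m + 1 : ℕ) : ℝ) ^ n
      = ∑ m ∈ Finset.range (N + 1), ∑ d ∈ Finset.Ico m (N + 1),
        ((j + d).choose j * d.choose m : ℝ) * (-1) ^ m / ((j + m + 1 : ℕ) : ℝ) ^ n := by
    have := Finset.sum_Ico_Ico_comm 0 (N + 1)
      (fun m d => ((j + d).choose j * d.choose m : ℝ) * (-1) ^ m / ((j + m + 1 : ℕ) : ℝ) ^ n)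
    simp only [Finset.range_eq_Ico]
    exact this.symm
  -- Step 4 : inner sum via hockey stick
  have step4 : ∀ m ∈ Finset.range (N + 1),
      ∑ d ∈ Finset.Ico m (N + 1), ((j + d).choose j * d.choose m : ℕ)
        = (j + m).choose j * (k + 1).choose (j + m + 1) := by
    intro m hm
    rw [Finset.mem_range] at hm
    have per : ∀ d ∈ Finset.Ico m (N + 1),
        ((j + d).choose j * d.choose m : ℕ)
          = (j + m).choose j * (j + d).choose (j + m) := by
      intro d hd
      rw [Finset.mem_Ico] at hd
      have := Nat.choose_mul (n := j + d) (k := j + m) (s := j) (by omega)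
      simp only [Nat.add_sub_cancel_left] at this
      rw [← this, Nat.mul_comm]
    rw [Finset.sum_congr rfl per, ← Finset.mul_sum]
    congr 1
    -- reindex d ↦ j + d
    have r1 : ∑ d ∈ Finset.Ico m (N + 1), (j + d).choose (j + m)
        = ∑ i ∈ Finset.Ico (j + m) (k + 1), i.choose (j + m) := by
      rw [Finset.sum_Ico_eq_sum_range, Finset.sum_Ico_eq_sum_range]
      rw [show N + 1 - m = k + 1 - (j + m) by omega]
      refine Finset.sum_congr rfl fun t _ => by rw [show j + (m + t) = j + m + t by omega]
    rw [r1, ← Finset.Ico_add_one_right_eq_Icc] at *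
    rw [← Nat.sum_Icc_choose k (j + m)]
    rw [Finset.Ico_add_one_right_eq_Icc]
  -- Step 5 : per-m identification
  rw [step1]
  rw [Finset.sum_congr rfl (fun d _ => step2 d), step3]
  have inner : ∀ m ∈ Finset.range (N + 1),
      ∑ d ∈ Finset.Ico m (N + 1),
        ((j + d).choose j * d.choose m : ℝ) * (-1) ^ m / ((j + m + 1 : ℕ) : ℝ) ^ n
      = ((j + m).choose j * (k + 1).choose (j + m + 1) : ℝ)
          * (-1) ^ m / ((j + m + 1 : ℕ) : ℝ) ^ n := by
    intro m hm
    rw [← Finset.sum_div, ← Finset.sum_mul]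
    have cast1 : ∑ d ∈ Finset.Ico m (N + 1), ((j + d).choose j : ℝ) * (d.choose m : ℝ)
        = ((∑ d ∈ Finset.Ico m (N + 1), (j + d).choose j * d.choose m : ℕ) : ℝ) := by
      push_cast; rfl
    rw [cast1, step4 m hm]
    push_cast; ring
  rw [Finset.sum_congr rfl inner, Finset.mul_sum]
  unfold cesKer
  rw [Finset.mul_sum]
  refine Finset.sum_congr rfl fun m hm => ?_
  rw [Finset.mem_range] at hm
  have key := natKey hj (show m ≤ k - j by omega)
  have keyR : ((j + m + 1 : ℕ) : ℝ) * ((j + m).choose j * (k + 1).choose (j + m + 1) : ℕ)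
      = ((k + 1 : ℕ) : ℝ) * (k.choose j * (k - j).choose m : ℕ) := by
    exact_mod_cast congrArg (Nat.cast : ℕ → ℝ) key
  push_cast at keyR ⊢
  have h1 : ((j:ℝ) + m + 1) ≠ 0 := by positivity
  have h2 : ((k:ℝ) + 1) ≠ 0 := by positivity
  have hA : ((j + m).choose j : ℝ) * ((k + 1).choose (j + m + 1) : ℝ)
      = ((k:ℝ) + 1) * ((k.choose j : ℝ) * ((k - j).choose m : ℝ)) / ((j:ℝ) + m + 1) := by
    field_simp
    linear_combination keyR
  rw [hA]
  field_simp
  ring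

lemma integrableOn_pow_exp (m : ℕ) {r : ℝ} (hr : 0 < r) :
    IntegrableOn (fun t : ℝ => t ^ m * Real.exp (-(r * t))) (Ioi 0) := by
  have h1 : IntegrableOn (fun t : ℝ => Real.exp (-t) * t ^ (((m:ℝ) + 1) - 1)) (Ioi 0) :=
    Real.GammaIntegral_convergent (by positivity)
  have h1' : IntegrableOn (fun t : ℝ => t ^ m * Real.exp (-t)) (Ioi 0) := by
    refine h1.congr_fun (fun t ht => ?_) measurableSet_Ioi
    dsimp only
    rw [add_sub_cancel_right, Real.rpow_natCast]
    ring
  have h2 : IntegrableOn (fun t : ℝ => (r * t) ^ m * Real.exp (-(r * t))) (Ioi 0) := by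
    have := (integrableOn_Ioi_comp_mul_left_iff
      (fun t : ℝ => t ^ m * Real.exp (-t)) 0 hr).2 (by simpa using h1')
    simpa using this
  have h3 := h2.const_mul ((r ^ m)⁻¹)
  refine IntegrableOn.congr_fun h3 (fun t _ => ?_) measurableSet_Ioi
  have hrm : r ^ m ≠ 0 := by positivity
  rw [mul_pow]
  field_simp

lemma integral_pow_exp (m : ℕ) {r : ℝ} (hr : 0 < r) :
    ∫ t in Ioi 0, t ^ m * Real.exp (-(r * t)) = (m.factorial : ℝ) / r ^ (m + 1) := by
  have h := Real.integral_rpow_mul_exp_neg_mul_Ioi (a := (m:ℝ) + 1) (by positivity) hr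
  have hL : ∫ t in Ioi 0, t ^ (((m:ℝ) + 1) - 1) * Real.exp (-(r * t))
      = ∫ t in Ioi 0, t ^ m * Real.exp (-(r * t)) := by
    refine setIntegral_congr_fun measurableSet_Ioi (fun t _ => ?_)
    rw [add_sub_cancel_right, Real.rpow_natCast]
  rw [hL] at h
  rw [h]
  rw [show ((m:ℝ) + 1) = ((m + 1 : ℕ) : ℝ) by push_cast; ring, Real.rpow_natCast]
  push_cast
  rw [Real.Gamma_nat_eq_factorial]
  rw [div_pow, one_pow]
  ring

/-- positive-kernel factor -/
def phi (k j : ℕ) (t : ℝ) : ℝ :=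
  (k.choose j : ℝ) * Real.exp (-(((j : ℝ) + 1) * t)) * (1 - Real.exp (-t)) ^ (k - j)

lemma phi_cont (k j : ℕ) : Continuous (phi k j) := by
  unfold phi; fun_prop

lemma phi_nonneg (k j : ℕ) {t : ℝ} (ht : 0 ≤ t) : 0 ≤ phi k j t := by
  unfold phi
  have h1 : Real.exp (-t) ≤ 1 := Real.exp_le_one_iff.2 (by linarith)
  have h2 : (0:ℝ) ≤ 1 - Real.exp (-t) := by linarith
  exact mul_nonneg (mul_nonneg (Nat.cast_nonneg _) (Real.exp_nonneg _)) (pow_nonneg h2 _)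

lemma phi_le (k j : ℕ) {t : ℝ} (ht : 0 ≤ t) :
    phi k j t ≤ (k.choose j : ℝ) * Real.exp (-t) := by
  unfold phi
  have h1 : Real.exp (-t) ≤ 1 := Real.exp_le_one_iff.2 (by linarith)
  have h2 : (1 - Real.exp (-t)) ^ (k - j) ≤ 1 :=
    pow_le_one₀ (by linarith) (by linarith [Real.exp_nonneg (-t)])
  have h3 : Real.exp (-(((j : ℝ) + 1) * t)) ≤ Real.exp (-t) := by
    apply Real.exp_le_exp.2
    nlinarith [Nat.cast_nonneg (α := ℝ) j]
  calc (k.choose j : ℝ) * Real.exp (-(((j : ℝ) + 1) * t)) * (1 - Real.exp (-t)) ^ (k - j)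
      ≤ (k.choose j : ℝ) * Real.exp (-(((j : ℝ) + 1) * t)) * 1 := by
        apply mul_le_mul_of_nonneg_left h2
        positivity
    _ ≤ (k.choose j : ℝ) * Real.exp (-t) := by
        rw [mul_one]
        apply mul_le_mul_of_nonneg_left h3 (by positivity)

lemma exp_mul_id (j i : ℕ) (t : ℝ) :
    Real.exp (-(((j : ℝ) + 1) * t)) * Real.exp (-t) ^ i
      = Real.exp (-(((j + i + 1 : ℕ) : ℝ) * t)) := by
  rw [← Real.exp_nat_mul, ← Real.exp_add]
  congr 1
  push_cast
  ring

lemma phi_expand (k j : ℕ) (n : ℕ) (t : ℝ) :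
    phi k j t * (t ^ n / (n.factorial : ℝ))
      = ∑ i ∈ Finset.range (k - j + 1),
          ((k.choose j : ℝ) * ((k - j).choose i : ℝ) * (-1) ^ i / (n.factorial : ℝ))
            * (t ^ n * Real.exp (-(((j + i + 1 : ℕ) : ℝ) * t))) := by
  unfold phi
  have hbin : (1 - Real.exp (-t)) ^ (k - j)
      = ∑ i ∈ Finset.range (k - j + 1),
          (-Real.exp (-t)) ^ i * 1 ^ (k - j - i) * ((k - j).choose i : ℝ) := by
    rw [show (1 : ℝ) - Real.exp (-t) = -Real.exp (-t) + 1 by ring, add_pow]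
  rw [hbin, Finset.mul_sum, Finset.sum_mul]
  refine Finset.sum_congr rfl fun i _ => ?_
  rw [← exp_mul_id j i t, neg_pow]
  ring

lemma cesKer_eq_integral (n k j : ℕ) (hj : j ≤ k) :
    cesKer (n + 1) k j = ∫ t in Ioi 0, phi k j t * (t ^ n / (n.factorial : ℝ)) := by
  have hfun : (fun t : ℝ => phi k j t * (t ^ n / (n.factorial : ℝ)))
      = fun t => ∑ i ∈ Finset.range (k - j + 1),
          ((k.choose j : ℝ) * ((k - j).choose i : ℝ) * (-1) ^ i / (n.factorial : ℝ))
            * (t ^ n * Real.exp (-(((j + i + 1 : ℕ) : ℝ) * t))) := funext (phi_expand k j n)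
  rw [hfun, integral_finset_sum]
  · have : ∀ i ∈ Finset.range (k - j + 1),
        ∫ t in Ioi 0, ((k.choose j : ℝ) * ((k - j).choose i : ℝ) * (-1) ^ i / (n.factorial : ℝ))
            * (t ^ n * Real.exp (-(((j + i + 1 : ℕ) : ℝ) * t)))
        = (k.choose j : ℝ) * (((k - j).choose i : ℝ) * (-1) ^ i / ((j + i + 1 : ℕ) : ℝ) ^ (n + 1)) := by
      intro i _
      rw [integral_const_mul]
      have hc : (0:ℝ) < ((j + i + 1 : ℕ) : ℝ) := by positivity
      rw [integral_pow_exp n hc]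
      have h1 : (n.factorial : ℝ) ≠ 0 := by positivity
      have h2 : ((j + i + 1 : ℕ) : ℝ) ^ (n + 1) ≠ 0 := by positivity
      field_simp
    rw [Finset.sum_congr rfl this, ← Finset.mul_sum]
    unfold cesKer
    rfl
  · intro i _
    have hc : (0:ℝ) < ((j + i + 1 : ℕ) : ℝ) := by positivity
    exact (integrableOn_pow_exp n hc).const_mul _

lemma integrableOn_pow_exp1 (m : ℕ) :
    IntegrableOn (fun t : ℝ => t ^ m * Real.exp (-t)) (Ioi 0) := by
  have := integrableOn_pow_exp m one_pos
  simpa using this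

/-- `H` whose derivative is `exp (-t) * ψ t`. -/
def Hfun (n : ℕ) (t : ℝ) : ℝ := t ^ (n + 1) * Real.exp (-t) / ((n + 1).factorial : ℝ)

def Hder (n : ℕ) (t : ℝ) : ℝ :=
  t ^ n * (((n : ℝ) + 1) - t) * Real.exp (-t) / ((n + 1).factorial : ℝ)

lemma hasDerivAt_Hfun (n : ℕ) (t : ℝ) : HasDerivAt (Hfun n) (Hder n t) t := by
  have h1 : HasDerivAt (fun x : ℝ => x ^ (n + 1)) ((((n : ℝ)) + 1) * t ^ n) t := by
    have := hasDerivAt_pow (n + 1) t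
    simpa using this
  have h2 : HasDerivAt (fun x : ℝ => Real.exp (-x)) (-Real.exp (-t)) t := by
    simpa using (hasDerivAt_neg t).exp
  have h3 := (h1.mul h2).div_const ((n + 1).factorial : ℝ)
  refine h3.congr_deriv ?_
  unfold Hder
  ring

lemma integrableOn_Hder (n : ℕ) : IntegrableOn (Hder n) (Ioi 0) := by
  have h1 := (integrableOn_pow_exp1 n).const_mul
    ((((n:ℝ) + 1)) / ((n + 1).factorial : ℝ))
  have h2 := (integrableOn_pow_exp1 (n + 1)).const_mul ((((n + 1).factorial : ℝ))⁻¹)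
  refine IntegrableOn.congr_fun (h1.sub h2) (fun t _ => ?_) measurableSet_Ioi
  unfold Hder
  simp only [Pi.sub_apply]
  have : (((n + 1).factorial : ℝ)) ≠ 0 := by positivity
  field_simp
  ring

lemma Hder_eq (n : ℕ) (t : ℝ) :
    Hder n t = Real.exp (-t) * (t ^ n / (n.factorial : ℝ) - t ^ (n + 1) / ((n + 1).factorial : ℝ)) := by
  unfold Hder
  have hfac : (((n + 1).factorial : ℝ)) = ((n : ℝ) + 1) * (n.factorial : ℝ) := by
    rw [Nat.factorial_succ]; push_cast; ring
  rw [hfac]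
  have h1 : (n.factorial : ℝ) ≠ 0 := by positivity
  have h2 : ((n : ℝ) + 1) ≠ 0 := by positivity
  field_simp
  ring

lemma psi_integral (n : ℕ) :
    ∫ t in Ioi 0, Real.exp (-t) * |t ^ n / (n.factorial : ℝ) - t ^ (n + 1) / ((n + 1).factorial : ℝ)|
      = 2 * ((n : ℝ) + 1) ^ (n + 1) * Real.exp (-((n : ℝ) + 1)) / ((n + 1).factorial : ℝ) := by
  have habs : ∀ t : ℝ, Real.exp (-t) *
      |t ^ n / (n.factorial : ℝ) - t ^ (n + 1) / ((n + 1).factorial : ℝ)| = |Hder n t| := by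
    intro t
    rw [Hder_eq, abs_mul, abs_of_pos (Real.exp_pos (-t))]
  simp_rw [habs]
  have hsplit : Ioc (0:ℝ) ((n:ℝ) + 1) ∪ Ioi ((n:ℝ) + 1) = Ioi (0:ℝ) :=
    Ioc_union_Ioi_eq_Ioi (by positivity)
  have hint : IntegrableOn (fun t => |Hder n t|) (Ioi 0) := (integrableOn_Hder n).abs
  rw [← hsplit, setIntegral_union (Ioc_disjoint_Ioi le_rfl) measurableSet_Ioi
    (hint.mono_set Ioc_subset_Ioi_self)
    (hint.mono_set (Ioi_subset_Ioi (by positivity)))]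
  have hIoc : ∫ t in Ioc (0:ℝ) ((n:ℝ) + 1), |Hder n t| = Hfun n ((n:ℝ) + 1) := by
    have e1 : ∫ t in Ioc (0:ℝ) ((n:ℝ) + 1), |Hder n t|
        = ∫ t in Ioc (0:ℝ) ((n:ℝ) + 1), Hder n t := by
      refine setIntegral_congr_fun measurableSet_Ioc (fun t ht => ?_)
      refine abs_of_nonneg ?_
      have h1 : (0:ℝ) < t := ht.1
      have h2 : t ≤ (n:ℝ) + 1 := ht.2
      unfold Hder
      have : (0:ℝ) ≤ ((n : ℝ) + 1) - t := by linarith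
      positivity
    rw [e1, ← intervalIntegral.integral_of_le (by positivity)]
    rw [intervalIntegral.integral_eq_sub_of_hasDerivAt (fun t _ => hasDerivAt_Hfun n t)]
    · unfold Hfun
      norm_num
    · rw [intervalIntegrable_iff_integrableOn_Ioc_of_le (by positivity)]
      exact (integrableOn_Hder n).mono_set Ioc_subset_Ioi_self
  have hIoi : ∫ t in Ioi ((n:ℝ) + 1), |Hder n t| = Hfun n ((n:ℝ) + 1) := by
    have e1 : ∫ t in Ioi ((n:ℝ) + 1), |Hder n t|
        = ∫ t in Ioi ((n:ℝ) + 1), -(Hder n t) := by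
      refine setIntegral_congr_fun measurableSet_Ioi (fun t ht => ?_)
      refine abs_of_nonpos ?_
      have h1 : ((n:ℝ) + 1) < t := ht
      unfold Hder
      have hn : (0:ℝ) ≤ t := le_trans (by positivity) h1.le
      have h2 : ((n : ℝ) + 1) - t ≤ 0 := by linarith
      have h3 : (0:ℝ) ≤ t ^ n := by positivity
      have h4 : (0:ℝ) < Real.exp (-t) := Real.exp_pos _
      have h5 : (0:ℝ) < (((n + 1).factorial : ℝ)) := by positivity
      have : t ^ n * (((n : ℝ) + 1) - t) ≤ 0 := mul_nonpos_of_nonneg_of_nonpos h3 h2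
      have : t ^ n * (((n : ℝ) + 1) - t) * Real.exp (-t) ≤ 0 := mul_nonpos_of_nonpos_of_nonneg this h4.le
      exact div_nonpos_of_nonpos_of_nonneg this h5.le
    rw [e1]
    have e2 := integral_Ioi_of_hasDerivAt_of_tendsto' (a := (n:ℝ) + 1) (m := (0:ℝ))
      (f := fun t => -(Hfun n t)) (f' := fun t => -(Hder n t))
      (fun t _ => (hasDerivAt_Hfun n t).neg)
      (((integrableOn_Hder n).mono_set (Ioi_subset_Ioi (by positivity))).neg)
      ?_
    · rw [e2]; ring
    · have := (Real.tendsto_pow_mul_exp_neg_atTop_nhds_zero (n + 1)).div_const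
        (((n + 1).factorial : ℝ))
      have h2 : Tendsto (fun t : ℝ => Hfun n t) atTop (nhds 0) := by
        unfold Hfun
        simpa using this
      simpa using h2.neg
  rw [hIoc, hIoi]
  unfold Hfun
  ring

lemma sum_phi (k : ℕ) (t : ℝ) :
    ∑ j ∈ Finset.range (k + 1), phi k j t = Real.exp (-t) := by
  have h1 : ∀ j : ℕ, Real.exp (-(((j:ℝ) + 1) * t)) = Real.exp (-t) * Real.exp (-t) ^ j := by
    intro j
    rw [← Real.exp_nat_mul, ← Real.exp_add]
    congr 1
    ring
  calc ∑ j ∈ Finset.range (k + 1), phi k j t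
      = Real.exp (-t) * ∑ j ∈ Finset.range (k + 1),
          Real.exp (-t) ^ j * (1 - Real.exp (-t)) ^ (k - j) * (k.choose j : ℝ) := by
        rw [Finset.mul_sum]
        refine Finset.sum_congr rfl fun j _ => ?_
        unfold phi
        rw [h1 j]
        ring
    _ = Real.exp (-t) * (Real.exp (-t) + (1 - Real.exp (-t))) ^ k := by rw [← add_pow]
    _ = Real.exp (-t) := by norm_num

lemma integrableOn_phi_pow (k j m : ℕ) :
    IntegrableOn (fun t : ℝ => phi k j t * (t ^ m / (m.factorial : ℝ))) (Ioi 0) := by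
  have hg : IntegrableOn
      (fun t : ℝ => ((k.choose j : ℝ) / (m.factorial : ℝ)) * (t ^ m * Real.exp (-t))) (Ioi 0) :=
    (integrableOn_pow_exp1 m).const_mul _
  refine Integrable.mono' hg ?_ ?_
  · exact ((phi_cont k j).mul ((continuous_pow m).div_const _)).aestronglyMeasurable
  · rw [ae_restrict_iff' measurableSet_Ioi]
    refine ae_of_all _ fun t ht => ?_
    have ht' : (0:ℝ) < t := ht
    have h0 : (0:ℝ) ≤ phi k j t := phi_nonneg k j ht'.le
    have h1 : (0:ℝ) ≤ t ^ m / (m.factorial : ℝ) := by positivity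
    rw [Real.norm_eq_abs, abs_of_nonneg (mul_nonneg h0 h1)]
    calc phi k j t * (t ^ m / (m.factorial : ℝ))
        ≤ ((k.choose j : ℝ) * Real.exp (-t)) * (t ^ m / (m.factorial : ℝ)) :=
          mul_le_mul_of_nonneg_right (phi_le k j ht'.le) h1
      _ = ((k.choose j : ℝ) / (m.factorial : ℝ)) * (t ^ m * Real.exp (-t)) := by
          have : (m.factorial : ℝ) ≠ 0 := by positivity
          field_simp

lemma rowBound (n k : ℕ) :
    ∑ j ∈ Finset.range (k + 1), |cesKer (n + 1) k j - cesKer (n + 2) k j|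
      ≤ 2 * ((n : ℝ) + 1) ^ (n + 1) * Real.exp (-((n : ℝ) + 1)) / ((n + 1).factorial : ℝ) := by
  set ψ : ℝ → ℝ := fun t => t ^ n / (n.factorial : ℝ) - t ^ (n + 1) / ((n + 1).factorial : ℝ)
    with hψ
  have habs : ∀ j ∈ Finset.range (k + 1),
      |cesKer (n + 1) k j - cesKer (n + 2) k j|
        ≤ ∫ t in Ioi 0, phi k j t * |ψ t| := by
    intro j hj
    rw [Finset.mem_range] at hj
    have hjk : j ≤ k := by omega
    have hint1 := integrableOn_phi_pow k j n
    have hint2 := integrableOn_phi_pow k j (n + 1)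
    rw [cesKer_eq_integral n k j hjk, show n + 2 = (n + 1) + 1 by rfl,
      cesKer_eq_integral (n + 1) k j hjk, ← integral_sub hint1 hint2]
    have e1 : ∀ t : ℝ, phi k j t * (t ^ n / (n.factorial : ℝ))
        - phi k j t * (t ^ (n + 1) / ((n + 1).factorial : ℝ)) = phi k j t * ψ t := by
      intro t; rw [hψ]; ring
    calc |∫ t in Ioi 0, (phi k j t * (t ^ n / (n.factorial : ℝ))
            - phi k j t * (t ^ (n + 1) / ((n + 1).factorial : ℝ)))|
        ≤ ∫ t in Ioi 0, |phi k j t * (t ^ n / (n.factorial : ℝ))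
            - phi k j t * (t ^ (n + 1) / ((n + 1).factorial : ℝ))| := by
          simpa [Real.norm_eq_abs] using MeasureTheory.norm_integral_le_integral_norm
            (μ := volume.restrict (Ioi 0)) (fun t => phi k j t * (t ^ n / (n.factorial : ℝ))
              - phi k j t * (t ^ (n + 1) / ((n + 1).factorial : ℝ)))
      _ = ∫ t in Ioi 0, phi k j t * |ψ t| := by
          refine setIntegral_congr_fun measurableSet_Ioi (fun t ht => ?_)
          have ht' : (0:ℝ) < t := ht
          rw [e1 t, abs_mul, abs_of_nonneg (phi_nonneg k j ht'.le)]
  have hintabs : ∀ j, j ≤ k → IntegrableOn (fun t : ℝ => phi k j t * |ψ t|) (Ioi 0) := by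
    intro j hjk
    have h := ((integrableOn_phi_pow k j n).sub (integrableOn_phi_pow k j (n + 1))).abs
    refine IntegrableOn.congr_fun h (fun t ht => ?_) measurableSet_Ioi
    have ht' : (0:ℝ) < t := ht
    simp only [Pi.sub_apply]
    rw [show phi k j t * (t ^ n / (n.factorial : ℝ))
        - phi k j t * (t ^ (n + 1) / ((n + 1).factorial : ℝ)) = phi k j t * ψ t by rw [hψ]; ring,
      abs_mul, abs_of_nonneg (phi_nonneg k j ht'.le)]
  calc ∑ j ∈ Finset.range (k + 1), |cesKer (n + 1) k j - cesKer (n + 2) k j|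
      ≤ ∑ j ∈ Finset.range (k + 1), ∫ t in Ioi 0, phi k j t * |ψ t| :=
        Finset.sum_le_sum habs
    _ = ∫ t in Ioi 0, ∑ j ∈ Finset.range (k + 1), phi k j t * |ψ t| := by
        rw [integral_finset_sum]
        intro j hj
        rw [Finset.mem_range] at hj
        exact hintabs j (by omega)
    _ = ∫ t in Ioi 0, Real.exp (-t) * |ψ t| := by
        refine setIntegral_congr_fun measurableSet_Ioi (fun t _ => ?_)
        rw [← Finset.sum_mul, sum_phi]
    _ = 2 * ((n : ℝ) + 1) ^ (n + 1) * Real.exp (-((n : ℝ) + 1)) / ((n + 1).factorial : ℝ) :=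
        psi_integral n

lemma stirling_bound (n : ℕ) (hn : 1 ≤ n) :
    ((n : ℝ)) ^ n * Real.exp (-(n : ℝ)) / (n.factorial : ℝ) ≤ 1 / Real.sqrt n := by
  obtain ⟨m, rfl⟩ : ∃ m, n = m + 1 := ⟨n - 1, by omega⟩
  have h1 : Real.sqrt Real.pi ≤ Stirling.stirlingSeq (m + 1) := by
    refine Antitone.le_of_tendsto Stirling.stirlingSeq'_antitone ?_ m
    exact Stirling.tendsto_stirlingSeq_sqrt_pi.comp (Filter.tendsto_add_atTop_nat 1)
  have hπ : (1:ℝ) ≤ Real.sqrt Real.pi := by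
    rw [show (1:ℝ) = Real.sqrt 1 by simp]
    exact Real.sqrt_le_sqrt (by linarith [Real.pi_gt_three])
  set N := m + 1 with hN
  have hNpos : (0:ℝ) < (N:ℝ) := by positivity
  have hden : (0:ℝ) < Real.sqrt (2 * N) * (((N:ℝ)) / Real.exp 1) ^ N := by
    apply mul_pos
    · exact Real.sqrt_pos.2 (by positivity)
    · exact pow_pos (by positivity) N
  have h2 : Real.sqrt (2 * N) * (((N:ℝ)) / Real.exp 1) ^ N ≤ (N.factorial : ℝ) := by
    have h3 := le_trans hπ h1
    rw [Stirling.stirlingSeq] at h3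
    calc Real.sqrt (2 * N) * (((N:ℝ)) / Real.exp 1) ^ N
        = (Real.sqrt (2 * N) * (((N:ℝ)) / Real.exp 1) ^ N) * 1 := by ring
      _ ≤ (Real.sqrt (2 * N) * (((N:ℝ)) / Real.exp 1) ^ N)
          * ((N.factorial : ℝ) / (Real.sqrt (2 * N) * (((N:ℝ)) / Real.exp 1) ^ N)) := by
          exact mul_le_mul_of_nonneg_left h3 hden.le
      _ = (N.factorial : ℝ) := by field_simp
  have hpow : (((N:ℝ)) / Real.exp 1) ^ N = ((N:ℝ)) ^ N * Real.exp (-(N:ℝ)) := by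
    rw [div_pow, Real.exp_one_pow, Real.exp_neg]
    ring
  rw [hpow] at h2
  have hsq : Real.sqrt ((N:ℝ)) ≤ Real.sqrt (2 * N) := Real.sqrt_le_sqrt (by linarith)
  have hsqpos : (0:ℝ) < Real.sqrt ((N:ℝ)) := Real.sqrt_pos.2 hNpos
  have hfacpos : (0:ℝ) < (N.factorial : ℝ) := by positivity
  rw [div_le_div_iff₀ hfacpos hsqpos]
  have hbody : (0:ℝ) ≤ ((N:ℝ)) ^ N * Real.exp (-(N:ℝ)) := by positivity
  calc ((N:ℝ)) ^ N * Real.exp (-(N:ℝ)) * Real.sqrt ((N:ℝ))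
      ≤ ((N:ℝ)) ^ N * Real.exp (-(N:ℝ)) * Real.sqrt (2 * N) := by
        apply mul_le_mul_of_nonneg_left hsq hbody
    _ = Real.sqrt (2 * N) * (((N:ℝ)) ^ N * Real.exp (-(N:ℝ))) := by ring
    _ ≤ (N.factorial : ℝ) := h2
    _ = 1 * (N.factorial : ℝ) := by ring

/-- Matrix representation of powers of the Cesàro operator. -/
lemma opRep (T : convSeqs →L[ℂ] convSeqs) (hT : IsCesaro T) (n : ℕ) :
    ∀ (x : convSeqs) (k : ℕ),
      ((T ^ (n + 1)) x : BoundedContinuousFunction ℕ ℂ) k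
        = ∑ j ∈ Finset.range (k + 1),
            ((cesKer (n + 1) k j : ℝ) : ℂ) * (x : BoundedContinuousFunction ℕ ℂ) j := by
  induction n with
  | zero =>
    intro x k
    rw [pow_one, hT x k, Finset.mul_sum]
    refine Finset.sum_congr rfl fun j hj => ?_
    rw [Finset.mem_range] at hj
    rw [cesKer_one (show j ≤ k by omega)]
    push_cast
    ring
  | succ n ih =>
    intro x k
    have hTpow : ((T ^ (n + 2)) x : BoundedContinuousFunction ℕ ℂ) k
        = (T ((T ^ (n + 1)) x) : BoundedContinuousFunction ℕ ℂ) k := by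
      rw [show T ^ (n + 2) = T * T ^ (n + 1) from (pow_succ' T (n + 1))]
      rfl
    rw [hTpow, hT _ k]
    have swap : ∑ i ∈ Finset.range (k + 1), ∑ j ∈ Finset.range (i + 1),
          ((cesKer (n + 1) i j : ℝ) : ℂ) * (x : BoundedContinuousFunction ℕ ℂ) j
        = ∑ j ∈ Finset.range (k + 1), ∑ i ∈ Finset.Icc j k,
          ((cesKer (n + 1) i j : ℝ) : ℂ) * (x : BoundedContinuousFunction ℕ ℂ) j := by
      simp only [← Finset.Ico_add_one_right_eq_Icc, Finset.range_eq_Ico]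
      exact (Finset.sum_Ico_Ico_comm 0 (k + 1)
        (fun j i => ((cesKer (n + 1) i j : ℝ) : ℂ) * (x : BoundedContinuousFunction ℕ ℂ) j)).symm
    calc ((k : ℂ) + 1)⁻¹ * ∑ i ∈ Finset.range (k + 1),
            ((T ^ (n + 1)) x : BoundedContinuousFunction ℕ ℂ) i
        = ((k : ℂ) + 1)⁻¹ * ∑ i ∈ Finset.range (k + 1), ∑ j ∈ Finset.range (i + 1),
            ((cesKer (n + 1) i j : ℝ) : ℂ) * (x : BoundedContinuousFunction ℕ ℂ) j := by
          rw [Finset.sum_congr rfl fun i _ => ih x i]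
      _ = ((k : ℂ) + 1)⁻¹ * ∑ j ∈ Finset.range (k + 1), ∑ i ∈ Finset.Icc j k,
            ((cesKer (n + 1) i j : ℝ) : ℂ) * (x : BoundedContinuousFunction ℕ ℂ) j := by
          rw [swap]
      _ = ∑ j ∈ Finset.range (k + 1),
            ((cesKer (n + 2) k j : ℝ) : ℂ) * (x : BoundedContinuousFunction ℕ ℂ) j := by
          rw [Finset.mul_sum]
          refine Finset.sum_congr rfl fun j hj => ?_
          rw [Finset.mem_range] at hj
          have hrec := cesKer_rec (show j ≤ k by omega) (n + 1)
          have hcast : ((cesKer (n + 2) k j : ℝ) : ℂ)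
              = ((k : ℂ) + 1)⁻¹ * ∑ i ∈ Finset.Icc j k, ((cesKer (n + 1) i j : ℝ) : ℂ) := by
            rw [show n + 2 = (n + 1) + 1 from rfl, hrec]
            push_cast
            ring
          rw [hcast, ← Finset.sum_mul]
          ring
end CesAux


/-- If `x ∈ c` satisfies `x₀ = lim_k x_k` and `∑_{k≥1} (x_k - x₀)/k` converges,
then `‖Tⁿx − Px‖_∞ = O(n^{-1/2})`. -/
theorem orbit_rate_of_series_convergent
    (T : convSeqs →L[ℂ] convSeqs) (hT : IsCesaro T) (x p : convSeqs)
    (hp : ∀ k : ℕ, (p : BoundedContinuousFunction ℕ ℂ) k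
      = (x : BoundedContinuousFunction ℕ ℂ) 0)
    (hx : Tendsto (fun k : ℕ => (x : BoundedContinuousFunction ℕ ℂ) k) atTop
      (nhds ((x : BoundedContinuousFunction ℕ ℂ) 0)))
    (hser : ∃ S : ℂ, Tendsto
      (fun n : ℕ => ∑ k ∈ Finset.Icc 1 n,
        ((x : BoundedContinuousFunction ℕ ℂ) k
          - (x : BoundedContinuousFunction ℕ ℂ) 0) / (k : ℂ))
      atTop (nhds S)) :
    ∃ C : ℝ, ∀ n : ℕ, 1 ≤ n → ‖(T ^ n) x - p‖ ≤ C / Real.sqrt n := by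
  classical
  obtain ⟨S, hS⟩ := hser
  set x0 : ℂ := (x : BoundedContinuousFunction ℕ ℂ) 0 with hx0
  set y : ℕ → ℂ := fun k => (x : BoundedContinuousFunction ℕ ℂ) k - x0 with hy
  set A : ℕ → ℂ := fun k => (∑ i ∈ Finset.Icc 1 k, y i / (i : ℂ)) - S with hA
  have hy0 : y 0 = 0 := by simp [hy, hx0]
  have hytend : Tendsto y atTop (nhds 0) := by
    have := hx.sub_const x0
    simpa [hy] using this
  have hAtend : Tendsto A atTop (nhds 0) := by
    have := hS.sub_const S
    simpa [hA, hy] using this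
  set w : ℕ → ℂ := fun k => y k + A k with hw
  have hwtend : Tendsto w atTop (nhds 0) := by
    have := hytend.add hAtend
    simpa [hw] using this
  -- w is bounded
  obtain ⟨Cw, hCw⟩ : ∃ Cw : ℝ, ∀ k, ‖w k‖ ≤ Cw := by
    obtain ⟨Cw, hCw⟩ := (hwtend.norm.bddAbove_range)
    exact ⟨Cw, fun k => hCw ⟨k, rfl⟩⟩
  set z0 : BoundedContinuousFunction ℕ ℂ :=
    BoundedContinuousFunction.ofNormedAddCommGroupDiscrete w Cw hCw with hz0
  have hz0coe : ∀ k, z0 k = w k := fun k => rfl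
  set z : convSeqs := ⟨z0, ⟨0, by simpa [hz0coe] using hwtend⟩⟩ with hz
  have hzcoe : (z : BoundedContinuousFunction ℕ ℂ) = z0 := rfl
  -- partial sums of w
  have hA0 : A 0 = -S := by simp [hA]
  have hsum : ∀ k, ∑ j ∈ Finset.range (k + 1), w j = ((k : ℂ) + 1) * A k := by
    intro k
    induction k with
    | zero => simp [hw, hy0]
    | succ k ihk =>
      rw [Finset.sum_range_succ, ihk]
      have hne : ((k : ℂ) + 1) ≠ 0 := Nat.cast_add_one_ne_zero k
      have hAstep : A k = A (k + 1) - y (k + 1) / ((k + 1 : ℕ) : ℂ) := by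
        simp only [hA]
        rw [Finset.sum_Icc_succ_top (by omega : 1 ≤ k + 1)]
        ring
      have hcan : ((k : ℂ) + 1) * (y (k + 1) / ((k + 1 : ℕ) : ℂ)) = y (k + 1) := by
        push_cast
        field_simp
      have hwdef : w (k + 1) = y (k + 1) + A (k + 1) := rfl
      rw [hAstep, hwdef]
      push_cast at hcan ⊢
      linear_combination -hcan
  -- T z pointwise
  have hTz : ∀ k, (T z : BoundedContinuousFunction ℕ ℂ) k = A k := by
    intro k
    rw [hT z k]
    have hzw : ∀ j, (z : BoundedContinuousFunction ℕ ℂ) j = w j := fun j => rfl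
    rw [Finset.sum_congr rfl fun j _ => hzw j, hsum k]
    have hne : ((k : ℂ) + 1) ≠ 0 := Nat.cast_add_one_ne_zero k
    field_simp
  -- the fundamental identity x - p = z - T z
  have hxp_eq : x - p = z - T z := by
    apply Subtype.ext
    apply BoundedContinuousFunction.ext
    intro k
    have h1 : ((x - p : convSeqs) : BoundedContinuousFunction ℕ ℂ) k
        = (x : BoundedContinuousFunction ℕ ℂ) k - (p : BoundedContinuousFunction ℕ ℂ) k := rfl
    have h2 : ((z - T z : convSeqs) : BoundedContinuousFunction ℕ ℂ) k
        = (z : BoundedContinuousFunction ℕ ℂ) k - (T z : BoundedContinuousFunction ℕ ℂ) k := rfl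
    rw [h1, h2, hTz k, hp k]
    show (x : BoundedContinuousFunction ℕ ℂ) k - x0 = w k - A k
    simp only [hw, hy]
    ring
  -- T fixes p
  have hne' : ∀ k : ℕ, ((k : ℂ) + 1) ≠ 0 := fun k => Nat.cast_add_one_ne_zero k
  have hTp : T p = p := by
    apply Subtype.ext
    apply BoundedContinuousFunction.ext
    intro k
    rw [hT p k]
    rw [Finset.sum_congr rfl fun j _ => hp j, Finset.sum_const, Finset.card_range,
      nsmul_eq_mul, hp k]
    push_cast
    rw [inv_mul_cancel_left₀ (hne' k)]
  have hTnp : ∀ n : ℕ, (T ^ n) p = p := by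
    intro n
    induction n with
    | zero => simp
    | succ n ih =>
      rw [pow_succ, ContinuousLinearMap.mul_apply, hTp, ih]
  -- main estimate
  refine ⟨2 * ‖z0‖, fun n hn => ?_⟩
  obtain ⟨m, rfl⟩ : ∃ m, n = m + 1 := ⟨n - 1, by omega⟩
  have key : (T ^ (m + 1)) x - p = (T ^ (m + 1)) z - (T ^ (m + 2)) z := by
    calc (T ^ (m + 1)) x - p = (T ^ (m + 1)) x - (T ^ (m + 1)) p := by rw [hTnp]
      _ = (T ^ (m + 1)) (x - p) := (map_sub _ _ _).symm
      _ = (T ^ (m + 1)) (z - T z) := by rw [hxp_eq]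
      _ = (T ^ (m + 1)) z - (T ^ (m + 1)) (T z) := map_sub _ _ _
      _ = (T ^ (m + 1)) z - (T ^ (m + 2)) z := by
          rw [show T ^ (m + 2) = T ^ (m + 1) * T from pow_succ T (m + 1),
            ContinuousLinearMap.mul_apply]
  rw [key]
  set B : ℝ := 2 * ((m : ℝ) + 1) ^ (m + 1) * Real.exp (-((m : ℝ) + 1))
      / ((m + 1).factorial : ℝ) with hB
  have hBpos : 0 ≤ B := by rw [hB]; positivity
  -- pointwise bound
  have hpt : ∀ k : ℕ,
      ‖(((T ^ (m + 1)) z - (T ^ (m + 2)) z : convSeqs) : BoundedContinuousFunction ℕ ℂ) k‖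
        ≤ B * ‖z0‖ := by
    intro k
    have hc : (((T ^ (m + 1)) z - (T ^ (m + 2)) z : convSeqs) : BoundedContinuousFunction ℕ ℂ) k
        = ((T ^ (m + 1)) z : BoundedContinuousFunction ℕ ℂ) k
          - ((T ^ (m + 2)) z : BoundedContinuousFunction ℕ ℂ) k := rfl
    rw [hc, CesAux.opRep T hT m z k,
      show m + 2 = (m + 1) + 1 from rfl, CesAux.opRep T hT (m + 1) z k,
      ← Finset.sum_sub_distrib]
    have hterm : ∀ j, ((CesAux.cesKer (m + 1) k j : ℝ) : ℂ) * (z : BoundedContinuousFunction ℕ ℂ) j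
        - ((CesAux.cesKer ((m + 1) + 1) k j : ℝ) : ℂ) * (z : BoundedContinuousFunction ℕ ℂ) j
        = (((CesAux.cesKer (m + 1) k j - CesAux.cesKer (m + 2) k j : ℝ)) : ℂ)
            * (z : BoundedContinuousFunction ℕ ℂ) j := by
      intro j
      push_cast
      ring
    rw [Finset.sum_congr rfl fun j _ => hterm j]
    calc ‖∑ j ∈ Finset.range (k + 1),
            (((CesAux.cesKer (m + 1) k j - CesAux.cesKer (m + 2) k j : ℝ)) : ℂ)
              * (z : BoundedContinuousFunction ℕ ℂ) j‖
        ≤ ∑ j ∈ Finset.range (k + 1),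
            ‖(((CesAux.cesKer (m + 1) k j - CesAux.cesKer (m + 2) k j : ℝ)) : ℂ)
              * (z : BoundedContinuousFunction ℕ ℂ) j‖ := norm_sum_le _ _
      _ ≤ ∑ j ∈ Finset.range (k + 1),
            |CesAux.cesKer (m + 1) k j - CesAux.cesKer (m + 2) k j| * ‖z0‖ := by
          refine Finset.sum_le_sum fun j _ => ?_
          rw [norm_mul, Complex.norm_real, Real.norm_eq_abs]
          exact mul_le_mul_of_nonneg_left (z0.norm_coe_le_norm j) (abs_nonneg _)
      _ = (∑ j ∈ Finset.range (k + 1),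
            |CesAux.cesKer (m + 1) k j - CesAux.cesKer (m + 2) k j|) * ‖z0‖ := by
          rw [Finset.sum_mul]
      _ ≤ B * ‖z0‖ := by
          refine mul_le_mul_of_nonneg_right ?_ (norm_nonneg _)
          rw [hB]
          exact CesAux.rowBound m k
  have h1 : ‖(T ^ (m + 1)) z - (T ^ (m + 2)) z‖ ≤ B * ‖z0‖ := by
    rw [show ‖(T ^ (m + 1)) z - (T ^ (m + 2)) z‖
      = ‖(((T ^ (m + 1)) z - (T ^ (m + 2)) z : convSeqs) : BoundedContinuousFunction ℕ ℂ)‖ from rfl]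
    exact (BoundedContinuousFunction.norm_le (by positivity)).2 hpt
  -- Stirling
  have h2 : B ≤ 2 / Real.sqrt ((m : ℝ) + 1) := by
    have hst := CesAux.stirling_bound (m + 1) (by omega)
    rw [hB]
    push_cast at hst
    calc 2 * ((m : ℝ) + 1) ^ (m + 1) * Real.exp (-((m : ℝ) + 1)) / ((m + 1).factorial : ℝ)
        = 2 * (((m : ℝ) + 1) ^ (m + 1) * Real.exp (-((m : ℝ) + 1)) / ((m + 1).factorial : ℝ)) := by
          ring
      _ ≤ 2 * (1 / Real.sqrt ((m : ℝ) + 1)) := by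
          refine mul_le_mul_of_nonneg_left ?_ (by norm_num)
          exact hst
      _ = 2 / Real.sqrt ((m : ℝ) + 1) := by ring
  have hsqrtpos : 0 < Real.sqrt ((m : ℝ) + 1) := Real.sqrt_pos.2 (by positivity)
  calc ‖(T ^ (m + 1)) z - (T ^ (m + 2)) z‖ ≤ B * ‖z0‖ := h1
    _ ≤ (2 / Real.sqrt ((m : ℝ) + 1)) * ‖z0‖ :=
        mul_le_mul_of_nonneg_right h2 (norm_nonneg _)
    _ = 2 * ‖z0‖ / Real.sqrt ((m : ℝ) + 1) := by ring
    _ = 2 * ‖z0‖ / Real.sqrt ((m + 1 : ℕ) : ℝ) := by push_cast; ring_nf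
end
end
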